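/- arXiv:1504.02941 — 5 statements merged into one kernel-verified Lean document; each statement's English description precedes it below -/
import Mathlib

section
/- Let k ≥ 2 and m ≥ 1 be integers, let A ⊆ ℝ^m be open, and let f : A → ℝ be continuously differentiable with 0 < f(x) < 1 and f(x)^{k-1} · √(1 + ‖∇f(x)‖²) = 1 for all x ∈ A. Define ω : A → ℝ by ω(x) = F_k(f(x)) = ∫₀^{f(x)} t^{k-1}/√(1 - t^{2k-2}) dt. Then ω is continuously differentiable on A and satisfies the eikonal equation ‖∇ω(x)‖ = 1 for all x ∈ A. -/
open MeasureTheory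

/-- `Fk k y = ∫₀^y t^{k-1}/√(1 - t^{2k-2}) dt`, the inverse of the codimension-`k`
Archimedean scaling function. -/
noncomputable def Fk (k : ℕ) (y : ℝ) : ℝ :=
  ∫ t in (0:ℝ)..y, t ^ (k - 1) / Real.sqrt (1 - t ^ (2 * k - 2))

section aux

variable {k : ℕ}

/-- The integrand of `Fk`. -/
noncomputable def FkInt (k : ℕ) (t : ℝ) : ℝ :=
  t ^ (k - 1) / Real.sqrt (1 - t ^ (2 * k - 2))

lemma one_sub_pow_pos (hk : 2 ≤ k) {t : ℝ} (ht : t ∈ Set.Ioo (-1:ℝ) 1) :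
    0 < 1 - t ^ (2 * k - 2) := by
  have h1 : |t| < 1 := abs_lt.2 ⟨ht.1, ht.2⟩
  have h2 : |t ^ (2 * k - 2)| < 1 := by
    rw [abs_pow]
    calc |t| ^ (2 * k - 2) ≤ |t| ^ 1 :=
          pow_le_pow_of_le_one (abs_nonneg t) h1.le (by omega)
      _ = |t| := pow_one _
      _ < 1 := h1
  have := (abs_lt.1 h2).2
  linarith

lemma FkInt_contOn (hk : 2 ≤ k) : ContinuousOn (FkInt k) (Set.Ioo (-1:ℝ) 1) := by
  apply ContinuousOn.div
  · exact (continuous_pow _).continuousOn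
  · exact (Real.continuous_sqrt.comp (by fun_prop)).continuousOn
  · intro t ht
    exact (Real.sqrt_pos.2 (one_sub_pow_pos hk ht)).ne'

lemma Fk_hasDerivAt (hk : 2 ≤ k) {y : ℝ} (hy : y ∈ Set.Ioo (-1:ℝ) 1) :
    HasDerivAt (Fk k) (FkInt k y) y := by
  have hsub : Set.uIcc (0:ℝ) y ⊆ Set.Ioo (-1:ℝ) 1 := by
    intro t ht
    rcases Set.mem_uIcc.1 ht with h | h
    · exact ⟨by linarith [h.1], lt_of_le_of_lt h.2 hy.2⟩
    · exact ⟨lt_of_lt_of_le hy.1 h.1, lt_of_le_of_lt h.2 one_pos⟩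
  have hint : IntervalIntegrable (FkInt k) volume 0 y :=
    ((FkInt_contOn hk).mono hsub).intervalIntegrable
  have hmeas : StronglyMeasurableAtFilter (FkInt k) (nhds y) volume :=
    (FkInt_contOn hk).stronglyMeasurableAtFilter isOpen_Ioo y hy
  have hcont : ContinuousAt (FkInt k) y :=
    (FkInt_contOn hk).continuousAt (isOpen_Ioo.mem_nhds hy)
  exact intervalIntegral.integral_hasDerivAt_right hint hmeas hcont

lemma Fk_contDiffOn (hk : 2 ≤ k) : ContDiffOn ℝ 1 (Fk k) (Set.Ioo (-1:ℝ) 1) := by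
  rw [show (1 : WithTop ℕ∞) = 0 + 1 from rfl,
    contDiffOn_succ_iff_deriv_of_isOpen isOpen_Ioo]
  refine ⟨fun y hy => ((Fk_hasDerivAt hk hy).differentiableAt).differentiableWithinAt,
    by simp, ?_⟩
  rw [contDiffOn_zero]
  exact (FkInt_contOn hk).congr fun y hy => (Fk_hasDerivAt hk hy).deriv

end aux

/-- **From the Archimedean PDE to the eikonal equation.** Let `k ≥ 2`, `m ≥ 1`,
let `A ⊆ ℝ^m` be open, and let `f` be continuously differentiable on `A` with
`0 < f < 1` and `f^{k-1} √(1 + ‖∇f‖²) = 1` on `A`.  Then `ω = Fk k ∘ f` is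
continuously differentiable on `A` and satisfies the eikonal equation
`‖∇ω‖ = 1` on `A`. -/
theorem eikonal_of_archimedean_pde (k m : ℕ) (hk : 2 ≤ k) (hm : 1 ≤ m)
    (A : Set (EuclideanSpace ℝ (Fin m))) (hA : IsOpen A)
    (f : EuclideanSpace ℝ (Fin m) → ℝ) (hf : ContDiffOn ℝ 1 f A)
    (hf01 : ∀ x ∈ A, 0 < f x ∧ f x < 1)
    (hpde : ∀ x ∈ A, f x ^ (k - 1) * Real.sqrt (1 + ‖gradient f x‖ ^ 2) = 1) :
    ContDiffOn ℝ 1 (fun x => Fk k (f x)) A ∧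
      ∀ x ∈ A, ‖gradient (fun x => Fk k (f x)) x‖ = 1 := by
  have hmaps : Set.MapsTo f A (Set.Ioo (-1:ℝ) 1) := fun x hx =>
    ⟨by linarith [(hf01 x hx).1], (hf01 x hx).2⟩
  constructor
  · exact (Fk_contDiffOn hk).comp hf hmaps
  · intro x hx
    have hfx : f x ∈ Set.Ioo (-1:ℝ) 1 := hmaps hx
    have hdf : DifferentiableAt ℝ f x :=
      (hf.differentiableOn one_ne_zero).differentiableAt (hA.mem_nhds hx)
    have hF : HasFDerivAt (fun x => Fk k (f x)) (FkInt k (f x) • fderiv ℝ f x) x :=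
      (Fk_hasDerivAt hk hfx).comp_hasFDerivAt x hdf.hasFDerivAt
    have hgrad : gradient (fun x => Fk k (f x)) x = FkInt k (f x) • gradient f x := by
      unfold gradient
      rw [hF.fderiv, _root_.map_smul]
    -- abbreviations
    set a : ℝ := f x ^ (k - 1) with ha_def
    have hfa : 0 < f x := (hf01 x hx).1
    have hfb : f x < 1 := (hf01 x hx).2
    have ha : 0 < a := pow_pos hfa _
    have ha1 : a < 1 := pow_lt_one₀ hfa.le hfb (by omega)
    have h2 : f x ^ (2 * k - 2) = a ^ 2 := by
      rw [ha_def, ← pow_mul]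
      congr 1
      omega
    have hs : (0:ℝ) < 1 - a ^ 2 := by nlinarith
    set G : ℝ := ‖gradient f x‖ with hG_def
    have hsqrt : Real.sqrt (1 + G ^ 2) = 1 / a := by
      have := hpde x hx
      field_simp at this ⊢
      linarith
    have hG2 : G ^ 2 = (1 - a ^ 2) / a ^ 2 := by
      have h1 : 1 + G ^ 2 = (1 / a) ^ 2 := by
        rw [← hsqrt, Real.sq_sqrt (by positivity)]
      field_simp at h1 ⊢
      nlinarith
    have hG : G = Real.sqrt (1 - a ^ 2) / a := by
      have : G = Real.sqrt (G ^ 2) := (Real.sqrt_sq (norm_nonneg _)).symm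
      rw [this, hG2, Real.sqrt_div hs.le, Real.sqrt_sq ha.le]
    have hFkInt : FkInt k (f x) = a / Real.sqrt (1 - a ^ 2) := by
      rw [FkInt, h2, ha_def]
    rw [hgrad, norm_smul, Real.norm_eq_abs, hFkInt, ← hG_def, hG,
      abs_of_pos (by positivity)]
    have hsq : 0 < Real.sqrt (1 - a ^ 2) := Real.sqrt_pos.2 hs
    field_simp
end

section
/- Let k ≥ 2 be an even integer. Then the function h : ℝ^k → ℝ defined by h(x) = F_k(‖x‖) = ∫₀^{‖x‖} t^{k-1}/√(1 - t^{2k-2}) dt is real-analytic on the open unit ball {x ∈ ℝ^k : ‖x‖ < 1}. -/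
open MeasureTheory

open FormalMultilinearSeries

private noncomputable def phiK (k : ℕ) (t : ℝ) : ℝ :=
  t ^ (k - 1) / Real.sqrt (1 - t ^ (2 * k - 2))

private noncomputable def gC (k : ℕ) (w : ℂ) : ℂ :=
  w ^ (k - 1) * (1 - w ^ (2 * k - 2)) ^ (-(1/2) : ℂ)

lemma normPowLt {k : ℕ} (hk : 2 ≤ k) {w : ℂ} (hw : w ∈ Metric.ball (0:ℂ) 1) :
    ‖w ^ (2 * k - 2)‖ < 1 := by
  rw [Metric.mem_ball, dist_zero_right] at hw
  rw [norm_pow]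
  exact pow_lt_one₀ (norm_nonneg w) hw (by omega)

lemma slitK {k : ℕ} (hk : 2 ≤ k) {w : ℂ} (hw : w ∈ Metric.ball (0:ℂ) 1) :
    (1 - w ^ (2 * k - 2)) ∈ Complex.slitPlane := by
  have h : ‖w ^ (2 * k - 2)‖ < 1 := normPowLt hk hw
  have : |(w ^ (2 * k - 2)).re| < 1 := lt_of_le_of_lt (Complex.abs_re_le_norm _) h
  left
  simp only [Complex.sub_re, Complex.one_re]
  cases abs_lt.mp this; linarith

lemma gC_diff {k : ℕ} (hk : 2 ≤ k) : DifferentiableOn ℂ (gC k) (Metric.ball 0 1) := by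
  intro w hw
  apply DifferentiableAt.differentiableWithinAt
  exact (differentiableAt_pow _).mul
    (((differentiableAt_const _).sub (differentiableAt_pow _)).cpow
      (differentiableAt_const _) (slitK hk hw))

lemma gC_real {k : ℕ} (hk : 2 ≤ k) {t : ℝ} (ht : |t| < 1) :
    gC k (t : ℂ) = ((phiK k t : ℝ) : ℂ) := by
  rw [gC, phiK]
  have hpow : t ^ (2 * k - 2) ≤ 1 := by
    calc t ^ (2 * k - 2) ≤ |t ^ (2 * k - 2)| := le_abs_self _
    _ = |t| ^ (2 * k - 2) := abs_pow t _
    _ ≤ 1 := pow_le_one₀ (abs_nonneg t) ht.le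
  have h0 : (0:ℝ) ≤ 1 - t ^ (2 * k - 2) := by linarith
  have h1 : (((1 - t ^ (2 * k - 2)) ^ (-(1/2) : ℝ) : ℝ) : ℂ)
      = ((1 - t ^ (2 * k - 2) : ℝ) : ℂ) ^ (((-(1/2) : ℝ)) : ℂ) :=
    Complex.ofReal_cpow h0 _
  have h2 : (1 - t ^ (2 * k - 2) : ℝ) ^ (-(1/2) : ℝ)
      = (Real.sqrt (1 - t ^ (2 * k - 2)))⁻¹ := by
    rw [Real.rpow_neg h0, Real.sqrt_eq_rpow]
  have h3 : ((1 - (t:ℂ) ^ (2 * k - 2))) = ((1 - t ^ (2 * k - 2) : ℝ) : ℂ) := by push_cast; ring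
  have h4 : (((-(1/2) : ℝ)) : ℂ) = (-(1/2) : ℂ) := by push_cast; ring
  rw [h3, ← h4, ← h1, h2]
  push_cast
  rw [div_eq_mul_inv]

lemma exists_coeffs (k : ℕ) (hk : 2 ≤ k) : ∃ a C : ℕ → ℝ,
    (∀ n, |a n| ≤ C n) ∧ (∀ r : ℝ, 0 ≤ r → r < 1 → Summable fun n => C n * r ^ n) ∧
    ∀ t : ℝ, |t| < 1 → HasSum (fun n => a n * t ^ n) (phiK k t) := by
  have key : ∀ R : NNReal, 0 < R → (R:ℝ) < 1 →
      HasFPowerSeriesOnBall (gC k) (cauchyPowerSeries (gC k) 0 R) 0 R := by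
    intro R hR0 hR1
    refine ((gC_diff hk).mono ?_).hasFPowerSeriesOnBall hR0
    intro z hz
    simp only [Metric.mem_closedBall, Metric.mem_ball] at hz ⊢
    linarith
  have h2 := key (1/2) (by norm_num) (by norm_num)
  set p := cauchyPowerSeries (gC k) 0 (1/2) with hp
  have keyp : ∀ R : NNReal, 0 < R → (R:ℝ) < 1 → HasFPowerSeriesOnBall (gC k) p 0 R := by
    intro R hR0 hR1
    have h := key R hR0 hR1
    rwa [h.hasFPowerSeriesAt.eq_formalMultilinearSeries h2.hasFPowerSeriesAt] at h
  have hrad : 1 ≤ p.radius := by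
    apply ENNReal.le_of_forall_nnreal_lt
    intro r hr
    rcases eq_or_lt_of_le (zero_le : (0:NNReal) ≤ r) with h0 | h0
    · simp [← h0]
    · exact (keyp r h0 (by exact_mod_cast hr)).r_le
  refine ⟨fun n => (p.coeff n).re, fun n => ‖p n‖, fun n => ?_, fun r hr0 hr1 => ?_, fun t ht => ?_⟩
  · calc |(p.coeff n).re| ≤ ‖p.coeff n‖ := Complex.abs_re_le_norm _
    _ ≤ ‖p n‖ := by
        have h := (p n).le_opNorm (fun _ => (1:ℂ))
        have he : ‖p.coeff n‖ = ‖p n fun _ => (1:ℂ)‖ := rfl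
        rw [he]
        simpa using h
  · set r' : NNReal := Real.toNNReal r with hr'
    have hc : (r' : ℝ) = r := Real.coe_toNNReal r hr0
    have hlt : (r' : ENNReal) < p.radius := by
      refine lt_of_lt_of_le ?_ hrad
      rw [show (1 : ENNReal) = ((1 : NNReal) : ENNReal) by norm_num, ENNReal.coe_lt_coe,
        ← NNReal.coe_lt_coe, hc]
      exact hr1
    have := p.summable_norm_mul_pow hlt
    rwa [hc] at this
  · set R : NNReal := Real.toNNReal ((|t|+1)/2) with hR
    have hcR : (R:ℝ) = (|t|+1)/2 := Real.coe_toNNReal _ (by positivity)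
    have hR1 : (R:ℝ) < 1 := by rw [hcR]; linarith [ht]
    have hR0 : 0 < R := by rw [← NNReal.coe_lt_coe, hcR]; positivity
    have hpR := keyp R hR0 hR1
    have hmem : (t:ℂ) ∈ Metric.eball (0:ℂ) R := by
      rw [mem_emetric_ball_zero_iff]
      have h1 : ‖(t:ℂ)‖ < (R:ℝ) := by
        rw [Complex.norm_real, Real.norm_eq_abs, hcR]; linarith
      exact enorm_lt_coe.mpr (by exact_mod_cast h1)
    have hs := hpR.hasSum (y := (t:ℂ)) hmem
    simp only [FormalMultilinearSeries.apply_eq_pow_smul_coeff, zero_add] at hs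
    rw [gC_real hk ht] at hs
    have hre := Complex.reCLM.hasSum hs
    simp only [Complex.reCLM_apply] at hre
    convert hre using 2 with n
    · rw [smul_eq_mul, show ((t:ℂ)^n) = ((t^n : ℝ):ℂ) by push_cast; ring,
        Complex.re_ofReal_mul]
      ring
    · exact (Complex.ofReal_re _).symm

lemma phiK_odd {k : ℕ} (hk : 2 ≤ k) (hke : Even k) (t : ℝ) : phiK k (-t) = -phiK k t := by
  have h1 : Odd (k - 1) := Nat.Even.sub_odd (by omega) hke odd_one
  have h2 : Even (2 * k - 2) := ⟨k - 1, by omega⟩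
  unfold phiK
  rw [h1.neg_pow, h2.neg_pow, neg_div]

lemma hasFPowerSeriesOnBall_ofScalars (f : ℝ → ℝ) (a C : ℕ → ℝ)
    (hle : ∀ n, |a n| ≤ C n) (hsum : ∀ r : ℝ, 0 ≤ r → r < 1 → Summable fun n => C n * r ^ n)
    (hs : ∀ t : ℝ, |t| < 1 → HasSum (fun n => a n * t ^ n) (f t)) :
    HasFPowerSeriesOnBall f (ofScalars ℝ a) 0 1 := by
  constructor
  · apply ENNReal.le_of_forall_nnreal_lt
    intro r hr
    have hr1 : (r:ℝ) < 1 := by exact_mod_cast hr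
    apply le_radius_of_summable
    have hbound : ∀ n, ‖ofScalars ℝ a n‖ * (r:ℝ) ^ n ≤ C n * (r:ℝ) ^ n := by
      intro n
      apply mul_le_mul_of_nonneg_right _ (pow_nonneg r.coe_nonneg n)
      have hnorm : ‖a n • ContinuousMultilinearMap.mkPiAlgebraFin ℝ n ℝ‖ = |a n| := by
        rw [norm_smul (a n) (ContinuousMultilinearMap.mkPiAlgebraFin ℝ n ℝ), ContinuousMultilinearMap.norm_mkPiAlgebraFin, Real.norm_eq_abs, mul_one]
      rw [ofScalars, hnorm]
      exact hle n
    exact Summable.of_nonneg_of_le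
      (fun n => mul_nonneg (norm_nonneg _) (pow_nonneg r.coe_nonneg n)) hbound
      (hsum r r.coe_nonneg hr1)
  · norm_num
  · intro y hy
    rw [mem_emetric_ball_zero_iff] at hy
    have hy1 : |y| < 1 := by
      rw [← Real.norm_eq_abs]
      rw [← ofReal_norm, ENNReal.ofReal_lt_one] at hy
      exact hy
    simp only [ofScalars_apply_eq, smul_eq_mul, zero_add]
    exact hs y hy1

lemma coeffs_even_vanish {k : ℕ} (hk : 2 ≤ k) (hke : Even k) (a C : ℕ → ℝ)
    (hle : ∀ n, |a n| ≤ C n) (hsum : ∀ r : ℝ, 0 ≤ r → r < 1 → Summable fun n => C n * r ^ n)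
    (hs : ∀ t : ℝ, |t| < 1 → HasSum (fun n => a n * t ^ n) (phiK k t)) :
    ∀ n, Even n → a n = 0 := by
  set a' : ℕ → ℝ := fun n => (-1) ^ (n + 1) * a n with ha'
  have hle' : ∀ n, |a' n| ≤ C n := by
    intro n
    rw [ha']
    simp only [abs_mul, abs_pow, abs_neg, abs_one, one_pow, one_mul]
    exact hle n
  have hs' : ∀ t : ℝ, |t| < 1 → HasSum (fun n => a' n * t ^ n) (phiK k t) := by
    intro t ht
    have h := (hs (-t) (by rwa [abs_neg])).neg
    rw [phiK_odd hk hke, neg_neg] at h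
    convert h using 2 with n
    · rfl
    rw [ha', neg_pow]
    ring
  have h1 := (hasFPowerSeriesOnBall_ofScalars _ a C hle hsum hs).hasFPowerSeriesAt
  have h2 := (hasFPowerSeriesOnBall_ofScalars _ a' C hle' hsum hs').hasFPowerSeriesAt
  have heq : a = a' := ofScalars_series_injective ℝ ℝ (h1.eq_formalMultilinearSeries h2)
  intro n hn
  have : a n = (-1) ^ (n + 1) * a n := by conv_lhs => rw [heq]
  have h3 : (-1:ℝ) ^ (n+1) = -1 := by
    rw [pow_succ, hn.neg_one_pow]; ring
  rw [h3] at this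
  linarith

lemma hasSum_Fk (k : ℕ) (a C : ℕ → ℝ)
    (hle : ∀ n, |a n| ≤ C n) (hsum : ∀ r : ℝ, 0 ≤ r → r < 1 → Summable fun n => C n * r ^ n)
    (hs : ∀ t : ℝ, |t| < 1 → HasSum (fun n => a n * t ^ n) (phiK k t))
    {y : ℝ} (hy0 : 0 ≤ y) (hy1 : y < 1) :
    HasSum (fun n => a n * (y ^ (n + 1) / (n + 1))) (Fk k y) := by
  set F : ℕ → ℝ → ℝ := fun n t => a n * t ^ n with hF
  have hF_int : ∀ n, Integrable (F n) (volume.restrict (Set.Ioc 0 y)) := fun n =>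
    (continuous_const.mul (continuous_pow n)).integrableOn_Ioc
  have hF_bound : ∀ n, (∫ t in Set.Ioc 0 y, ‖F n t‖) ≤ C n * y ^ n * y := by
    intro n
    have h1 : ∀ t ∈ Set.Ioc (0:ℝ) y, ‖‖F n t‖‖ ≤ |a n| * y ^ n := by
      intro t ht
      rw [norm_norm, hF]
      simp only [norm_mul, Real.norm_eq_abs, abs_pow]
      apply mul_le_mul_of_nonneg_left _ (abs_nonneg _)
      apply pow_le_pow_left₀ (abs_nonneg t)
      rw [abs_of_pos ht.1]
      exact ht.2
    have h2 := norm_setIntegral_le_of_norm_le_const (μ := volume)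
      (f := fun t => ‖F n t‖) (s := Set.Ioc 0 y) measure_Ioc_lt_top h1
    rw [measureReal_def, Real.volume_Ioc] at h2
    calc (∫ t in Set.Ioc 0 y, ‖F n t‖) ≤ ‖∫ t in Set.Ioc 0 y, ‖F n t‖‖ := le_abs_self _
    _ ≤ |a n| * y ^ n * (ENNReal.ofReal (y - 0)).toReal := h2
    _ ≤ C n * y ^ n * y := by
        rw [sub_zero, ENNReal.toReal_ofReal hy0]
        apply mul_le_mul_of_nonneg_right _ hy0
        exact mul_le_mul_of_nonneg_right (hle n) (pow_nonneg hy0 n)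
  have hF_sum : Summable fun n => ∫ t in Set.Ioc 0 y, ‖F n t‖ :=
    Summable.of_nonneg_of_le (fun n => integral_nonneg fun t => norm_nonneg _)
      hF_bound (((hsum y hy0 hy1).mul_right y))
  have hkey := hasSum_integral_of_summable_integral_norm hF_int hF_sum
  have heq1 : (∫ t in Set.Ioc 0 y, ∑' n, F n t) = Fk k y := by
    rw [Fk, intervalIntegral.integral_of_le hy0]
    apply setIntegral_congr_fun measurableSet_Ioc
    intro t ht
    have ht1 : |t| < 1 := by
      rw [abs_of_pos ht.1]; exact lt_of_le_of_lt ht.2 hy1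
    exact (hs t ht1).tsum_eq
  have heq2 : ∀ n, (∫ t in Set.Ioc 0 y, F n t) = a n * (y ^ (n + 1) / (n + 1)) := by
    intro n
    rw [← intervalIntegral.integral_of_le hy0, hF]
    simp only
    rw [intervalIntegral.integral_const_mul, integral_pow]
    norm_num
  rw [heq1] at hkey
  convert hkey using 2 with n
  · rfl
  exact (heq2 n).symm

/-- For even `k ≥ 2`, the radial function `x ↦ Fk k ‖x‖` is real-analytic on the
open unit ball of `ℝ^k`. -/
theorem radial_Fk_analytic_of_even (k : ℕ) (hk : 2 ≤ k) (hke : Even k) :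
    AnalyticOnNhd ℝ (fun x : EuclideanSpace ℝ (Fin k) => Fk k ‖x‖)
      (Metric.ball 0 1) := by
  obtain ⟨a, C, hle, hsum, hs⟩ := exists_coeffs k hk
  have haeven := coeffs_even_vanish hk hke a C hle hsum hs
  set d : ℕ → ℝ := fun j => if j = 0 then 0 else a (2*j-1) / (2*j) with hd
  set D : ℕ → ℝ := fun j => if j = 0 then 0 else C (2*j-1) with hD
  have hdD : ∀ j, |d j| ≤ D j := by
    intro j
    rw [hd, hD]
    cases j with
    | zero => simp
    | succ m =>
      simp only [Nat.succ_ne_zero, if_false, abs_div]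
      have hpos : (0:ℝ) < 2 * ((m:ℝ) + 1) := by positivity
      have habs : |(2 * ((m:ℝ)+1))| = 2 * ((m:ℝ)+1) := abs_of_pos hpos
      push_cast
      rw [habs]
      calc |a (2*(m+1)-1)| / (2 * ((m:ℝ)+1)) ≤ |a (2*(m+1)-1)| :=
            div_le_self (abs_nonneg _) (by linarith [Nat.cast_nonneg (α := ℝ) m])
      _ ≤ C (2*(m+1)-1) := hle _
  have hDsum : ∀ s : ℝ, 0 ≤ s → s < 1 → Summable fun j => D j * s ^ j := by
    intro s hs0 hs1
    rw [← summable_nat_add_iff 1]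
    rcases eq_or_lt_of_le hs0 with h0 | h0
    · apply summable_of_ne_finset_zero (s := ∅)
      intro j _
      rw [← h0]
      simp
    · set σ := Real.sqrt s with hσ
      have hσ0 : 0 < σ := Real.sqrt_pos.mpr h0
      have hσ1 : σ < 1 := by
        rw [hσ, show (1:ℝ) = Real.sqrt 1 by simp]
        exact Real.sqrt_lt_sqrt hs0 hs1
      have hσsq : σ ^ 2 = s := Real.sq_sqrt hs0
      have hinj : Function.Injective (fun j : ℕ => 2*j+1) := by intro x y h; simp only at h; omega
      have hbase := ((hsum σ hσ0.le hσ1).comp_injective hinj).mul_right σ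
      apply Summable.congr hbase
      intro j
      simp only [Function.comp]
      have h1 : 2*(j+1)-1 = 2*j+1 := by omega
      have h2 : s ^ (j+1) = σ ^ (2*j+1) * σ := by
        rw [← hσsq, ← pow_mul]
        rw [show 2*(j+1) = (2*j+1)+1 by omega, pow_succ]
      rw [hD]
      simp only [Nat.succ_ne_zero, if_false]
      rw [h1, h2]
      ring
  have hFkSum : ∀ y : ℝ, 0 ≤ y → y < 1 → HasSum (fun j => d j * (y^2)^j) (Fk k y) := by
    intro y hy0 hy1
    have hFk := hasSum_Fk k a C hle hsum hs hy0 hy1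
    have hi : Function.Injective (fun j : ℕ => 2*j+1) := by intro x y h; simp only at h; omega
    have h0 : ∀ n, n ∉ Set.range (fun j : ℕ => 2*j+1) →
        a n * (y ^ (n+1) / (n+1)) = 0 := by
      intro n hn
      have he : Even n := by
        rcases Nat.even_or_odd n with h | h
        · exact h
        · obtain ⟨m, hm⟩ := h
          exact absurd ⟨m, show 2*m+1 = n by omega⟩ hn
      rw [haeven n he, zero_mul]
    have hcomp := (Function.Injective.hasSum_iff hi h0).mpr hFk
    refine (hasSum_nat_add_iff' 1).mp ?_
    have hval : Fk k y - ∑ i ∈ Finset.range 1, d i * (y^2)^i = Fk k y := by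
      simp [hd]
    rw [hval]
    have hfun : (fun j => d (j+1) * (y^2)^(j+1))
        = (fun n => a n * (y ^ (n+1) / (n+1))) ∘ (fun j : ℕ => 2*j+1) := by
      funext j
      simp only [Function.comp, hd, Nat.succ_ne_zero, if_false]
      have h1 : 2*(j+1)-1 = 2*j+1 := by omega
      have h2 : (y^2)^(j+1) = y^(2*j+1+1) := by
        rw [show 2*j+1+1 = 2*(j+1) by omega, pow_mul]
      rw [h1, h2]
      push_cast
      try ring
    rw [hfun]
    exact hcomp
  set G : ℝ → ℝ := fun u => ∑' j, d j * u ^ j with hG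
  have hGsum : ∀ u : ℝ, |u| < 1 → HasSum (fun j => d j * u ^ j) (G u) := by
    intro u hu
    refine Summable.hasSum ?_
    apply Summable.of_norm_bounded (hDsum |u| (abs_nonneg u) hu)
    intro j
    rw [norm_mul, Real.norm_eq_abs, Real.norm_eq_abs, abs_pow]
    exact mul_le_mul_of_nonneg_right (hdD j) (pow_nonneg (abs_nonneg u) j)
  have hGanalytic : AnalyticOnNhd ℝ G (Metric.eball (0:ℝ) 1) :=
    (hasFPowerSeriesOnBall_ofScalars G d D hdD hDsum hGsum).analyticOnNhd
  intro x hx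
  have hx1 : ‖x‖ < 1 := by rwa [Metric.mem_ball, dist_zero_right] at hx
  set q : EuclideanSpace ℝ (Fin k) → ℝ := fun z => ∑ i, (z i) ^ 2 with hq
  have hqnorm : ∀ z : EuclideanSpace ℝ (Fin k), q z = ‖z‖ ^ 2 := by
    intro z
    rw [hq]
    have h1 : ‖z‖ = Real.sqrt (∑ i, (z i) ^ 2) := by
      rw [EuclideanSpace.norm_eq]
      congr 1
      apply Finset.sum_congr rfl
      intro i _
      rw [Real.norm_eq_abs, sq_abs]
    rw [h1, Real.sq_sqrt (Finset.sum_nonneg fun i _ => sq_nonneg _)]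
  have hqA : AnalyticAt ℝ q x := by
    apply Finset.analyticAt_fun_sum
    intro i _
    exact ((EuclideanSpace.proj i : EuclideanSpace ℝ (Fin k) →L[ℝ] ℝ).analyticAt x).pow 2
  have hGat : AnalyticAt ℝ G (q x) := by
    apply hGanalytic
    rw [mem_emetric_ball_zero_iff]
    have h2 : ‖q x‖ < 1 := by
      rw [hqnorm, Real.norm_eq_abs, abs_of_nonneg (sq_nonneg _)]
      exact pow_lt_one₀ (norm_nonneg x) hx1 (by norm_num)
    rw [← ofReal_norm, ENNReal.ofReal_lt_one]
    exact h2
  have hcomp := hGat.comp hqA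
  apply hcomp.congr
  filter_upwards [Metric.isOpen_ball.mem_nhds hx] with z hz
  have hz1 : ‖z‖ < 1 := by rwa [Metric.mem_ball, dist_zero_right] at hz
  have := (hFkSum ‖z‖ (norm_nonneg z) hz1).tsum_eq
  simp only [Function.comp]
  rw [hG, hqnorm z]
  exact this
end

section
/- Let k ≥ 3 be an odd integer. Then the function h : ℝ^k → ℝ defined by h(x) = F_k(‖x‖) = ∫₀^{‖x‖} t^{k-1}/√(1 - t^{2k-2}) dt is of class C^{k-1} on the open unit ball {x ∈ ℝ^k : ‖x‖ < 1}. -/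
open MeasureTheory

open Metric Set Filter
open scoped RealInnerProductSpace Topology

set_option linter.unusedSectionVars false
set_option linter.unusedTactic false

section Helpers

variable {E : Type} [NormedAddCommGroup E] [InnerProductSpace ℝ E]
  [FiniteDimensional ℝ E] [Nontrivial E]
variable {F : Type} [NormedAddCommGroup F] [NormedSpace ℝ F]

lemma norm_hasFDerivAt {x : E} (hx : x ≠ 0) :
    HasFDerivAt (fun y : E => ‖y‖) (‖x‖⁻¹ • innerSL ℝ x) x := by
  have hnx : ‖x‖ ≠ 0 := norm_ne_zero_iff.mpr hx
  have hq : ⟪x, x⟫ ≠ 0 := by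
    rw [real_inner_self_eq_norm_mul_norm]
    exact mul_ne_zero hnx hnx
  have h1 := (hasFDerivAt_id x).inner ℝ (hasFDerivAt_id x)
  simp only [id_eq] at h1
  have h1' : HasFDerivAt (fun y : E => ⟪y, y⟫)
      ((fderivInnerCLM ℝ (x, x)).comp
        ((ContinuousLinearMap.id ℝ E).prod (ContinuousLinearMap.id ℝ E))) x := h1
  have h2 := HasDerivAt.comp_hasFDerivAt (f := fun y : E => ⟪y, y⟫) x (Real.hasDerivAt_sqrt hq) h1'
  have hfun : (Real.sqrt ∘ fun y : E => ⟪y, y⟫) = fun y : E => ‖y‖ := by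
    funext y
    simp only [Function.comp_apply, real_inner_self_eq_norm_mul_norm,
      Real.sqrt_mul_self (norm_nonneg y)]
  rw [hfun] at h2
  refine h2.congr_fderiv (Eq.symm ?_)
  ext v
  simp only [ContinuousLinearMap.smul_apply, innerSL_apply_apply, ContinuousLinearMap.coe_comp',
    Function.comp_apply, ContinuousLinearMap.prod_apply, ContinuousLinearMap.coe_id', id_eq,
    fderivInnerCLM_apply, smul_eq_mul]
  rw [real_inner_comm v x, real_inner_self_eq_norm_mul_norm, Real.sqrt_mul_self (norm_nonneg x)]
  field_simp
  ring


lemma bound_of_homog {g : E → F} (hg : Continuous g) {d : ℕ}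
    (hom : ∀ t : ℝ, 0 ≤ t → ∀ x : E, g (t • x) = t ^ d • g x) :
    ∃ C : ℝ, 0 ≤ C ∧ ∀ x : E, ‖g x‖ ≤ C * ‖x‖ ^ d := by
  obtain ⟨C, hC⟩ := (isCompact_sphere (0 : E) 1).exists_bound_of_continuousOn
    hg.continuousOn
  refine ⟨max C 0, le_max_right _ _, fun x => ?_⟩
  by_cases hx : x = 0
  · subst hx
    rcases Nat.eq_zero_or_pos d with hd | hd
    · subst hd
      obtain ⟨u, hu⟩ := NormedSpace.sphere_nonempty (x := (0 : E)) (r := 1).mpr zero_le_one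
      have h0 : g 0 = g u := by simpa using hom 0 le_rfl u
      simp only [norm_zero, pow_zero, mul_one, h0]
      exact le_trans (hC u hu) (le_max_left _ _)
    · have h0 : g 0 = 0 := by
        have := hom 0 le_rfl 0
        simpa [zero_pow hd.ne'] using this
      simp only [h0, norm_zero]
      positivity
  · have hnx : (0:ℝ) < ‖x‖ := norm_pos_iff.mpr hx
    set u : E := ‖x‖⁻¹ • x with hu_def
    have hu : u ∈ sphere (0 : E) 1 := by
      simp [hu_def, norm_smul, abs_of_nonneg (inv_nonneg.mpr hnx.le),
        inv_mul_cancel₀ hnx.ne']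
    have hxu : x = ‖x‖ • u := by
      rw [hu_def, smul_inv_smul₀ hnx.ne']
    have hgx : g x = ‖x‖ ^ d • g u := by
      have := hom ‖x‖ hnx.le u
      rwa [← hxu] at this
    calc ‖g x‖ = ‖x‖ ^ d * ‖g u‖ := by
          rw [hgx, norm_smul, norm_pow, norm_norm]
      _ ≤ ‖x‖ ^ d * C := by
          exact mul_le_mul_of_nonneg_left (hC u hu) (by positivity)
      _ ≤ max C 0 * ‖x‖ ^ d := by
          rw [mul_comm]
          exact mul_le_mul_of_nonneg_right (le_max_left _ _) (by positivity)

lemma fderiv_homog {g : E → F} (hg : ContDiff ℝ (⊤ : ℕ∞) g) {d : ℕ}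
    (hom : ∀ t : ℝ, 0 ≤ t → ∀ x : E, g (t • x) = t ^ d • g x) :
    ∀ t : ℝ, 0 ≤ t → ∀ x : E, fderiv ℝ g (t • x) = t ^ (d - 1) • fderiv ℝ g x := by
  rcases Nat.eq_zero_or_pos d with hd | hd
  · subst hd
    have hgc : ∀ x : E, g x = g 0 := by
      intro x
      have := hom 0 le_rfl x
      simpa using this.symm
    have : g = fun _ => g 0 := funext hgc
    rw [this]
    intro t ht x
    simp [fderiv_const]
  · obtain ⟨m, rfl⟩ : ∃ m, d = m + 1 := ⟨d - 1, by omega⟩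
    have hdiff : Differentiable ℝ g := hg.differentiable (by simp)
    have key : ∀ t : ℝ, 0 < t → ∀ x : E, fderiv ℝ g (t • x) = t ^ m • fderiv ℝ g x := by
      intro t ht x
      have hL : HasFDerivAt (fun y : E => g (t • y))
          ((fderiv ℝ g (t • x)).comp (t • ContinuousLinearMap.id ℝ E)) x := by
        have hsm : HasFDerivAt (fun y : E => t • y) (t • ContinuousLinearMap.id ℝ E) x :=
          (hasFDerivAt_id x).const_smul t
        exact (hdiff (t • x)).hasFDerivAt.comp x hsm
      have hR : HasFDerivAt (fun y : E => g (t • y)) (t ^ (m+1) • fderiv ℝ g x) x := by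
        have : (fun y : E => g (t • y)) = fun y : E => t ^ (m+1) • g y := by
          funext y; exact hom t ht.le y
        rw [this]
        exact (hdiff x).hasFDerivAt.const_smul (t ^ (m+1))
      have heq := hL.unique hR
      ext v
      have := congrArg (fun (L : E →L[ℝ] F) => L (t⁻¹ • v)) heq
      simp only [ContinuousLinearMap.coe_comp', Function.comp_apply,
        ContinuousLinearMap.smul_apply, ContinuousLinearMap.coe_id', id_eq,
        smul_inv_smul₀ ht.ne'] at this
      rw [this, _root_.map_smul, smul_smul, ContinuousLinearMap.smul_apply]
      congr 1
      rw [pow_succ, mul_assoc, mul_inv_cancel₀ ht.ne', mul_one]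
    intro t ht x
    rcases eq_or_lt_of_le ht with rfl | htpos
    · have hcont : ContinuousAt (fderiv ℝ g) 0 :=
        (hg.continuous_fderiv (by simp)).continuousAt
      have T1 : Tendsto (fun s : ℝ => fderiv ℝ g (s • x)) (𝓝[>] 0)
          (𝓝 (fderiv ℝ g 0)) := by
        have : Tendsto (fun s : ℝ => s • x) (𝓝[>] (0:ℝ)) (𝓝 (0 : E)) := by
          have := ((continuous_id.smul continuous_const : Continuous fun s : ℝ => s • x)).tendsto 0
          change Tendsto (fun s : ℝ => s • x) (𝓝 0) (𝓝 ((0:ℝ) • x)) at this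
          simpa only [zero_smul] using this.mono_left nhdsWithin_le_nhds
        exact hcont.tendsto.comp this
      have T2 : Tendsto (fun s : ℝ => fderiv ℝ g (s • x)) (𝓝[>] 0)
          (𝓝 ((0:ℝ) ^ m • fderiv ℝ g x)) := by
        have hT : Tendsto (fun s : ℝ => s ^ m • fderiv ℝ g x) (𝓝[>] (0:ℝ))
            (𝓝 ((0:ℝ) ^ m • fderiv ℝ g x)) := by
          have : Continuous (fun s : ℝ => s ^ m • fderiv ℝ g x) := by continuity
          exact (this.tendsto 0).mono_left nhdsWithin_le_nhds
        refine hT.congr' ?_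
        filter_upwards [self_mem_nhdsWithin] with s hs
        exact (key s hs x).symm
      have := tendsto_nhds_unique T1 T2
      simpa using this
    · simpa using key t htpos x


lemma key_induct : ∀ (n : ℕ) {F : Type} [NormedAddCommGroup F] [NormedSpace ℝ F]
    (e : ℤ) (d : ℕ) (f : ℝ → ℝ) (g : E → F),
    Odd e → ContDiffOn ℝ (⊤ : ℕ∞) f (Set.Ioo (-1) 1) → ContDiff ℝ (⊤ : ℕ∞) g →
    (∀ t : ℝ, 0 ≤ t → ∀ x : E, g (t • x) = t ^ d • g x) →
    (e + d = n + 1) →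
    ContDiffOn ℝ (n : ℕ) (fun x : E => (‖x‖ ^ e * f (‖x‖ ^ 2)) • g x) (ball 0 1) := by
  have htop : ((⊤:ℕ∞) : WithTop ℕ∞) + 1 ≤ ((⊤:ℕ∞) : WithTop ℕ∞) := by exact_mod_cast le_top
  have hone : (1 : WithTop ℕ∞) ≤ ((⊤:ℕ∞) : WithTop ℕ∞) := by exact_mod_cast le_top
  intro n
  induction n with
  | zero =>
    intro F _ _ e d f g he hf hg hom hed
    have hene : e ≠ 0 := by rcases he with ⟨c, rfl⟩; omega
    obtain ⟨C, hC0, hC⟩ := bound_of_homog (hg.continuous) hom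
    rw [show ((0:ℕ):WithTop ℕ∞) = 0 by norm_cast, contDiffOn_zero]
    intro x hx
    rw [mem_ball_zero_iff] at hx
    by_cases hx0 : x = 0
    · subst hx0
      apply ContinuousAt.continuousWithinAt
      have hu0 : (‖(0:E)‖ ^ e * f (‖(0:E)‖ ^ 2)) • g 0 = 0 := by
        simp [zero_zpow e hene]
      have hbnd : ∀ y : E, ‖(‖y‖ ^ e * f (‖y‖ ^ 2)) • g y‖ ≤ |f (‖y‖ ^ 2)| * (C * ‖y‖) := by
        intro y
        by_cases hy : y = 0
        · subst hy; simp [zero_zpow e hene]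
        · have hny : (0:ℝ) < ‖y‖ := norm_pos_iff.mpr hy
          rw [norm_smul, norm_mul]
          calc |‖y‖ ^ e| * |f (‖y‖ ^ 2)| * ‖g y‖
              ≤ |‖y‖ ^ e| * |f (‖y‖ ^ 2)| * (C * ‖y‖ ^ d) := by
                exact mul_le_mul_of_nonneg_left (hC y) (by positivity)
            _ = |f (‖y‖ ^ 2)| * (C * (‖y‖ ^ e * ‖y‖ ^ (d:ℤ))) := by
                rw [abs_of_nonneg (zpow_nonneg hny.le e), zpow_natCast]
                ring
            _ = |f (‖y‖ ^ 2)| * (C * ‖y‖) := by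
                rw [← zpow_add₀ hny.ne', hed]
                norm_num
      have hcf : ContinuousAt (fun y : E => |f (‖y‖ ^ 2)| * (C * ‖y‖)) 0 := by
        have hsq : ContinuousAt (fun y : E => ‖y‖ ^ 2) (0:E) := (continuous_norm.pow 2).continuousAt
        have hf0 : ContinuousAt f ((fun y : E => ‖y‖ ^ 2) (0:E)) := by
          apply hf.continuousOn.continuousAt
          apply Ioo_mem_nhds <;> norm_num
        have h3 : ContinuousAt (fun y : E => f (‖y‖ ^ 2)) 0 :=
          ContinuousAt.comp (f := fun y : E => ‖y‖ ^ 2) hf0 hsq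
        exact (h3.abs).mul ((continuous_const.mul continuous_norm).continuousAt)
      have hT : Filter.Tendsto (fun y : E => (‖y‖ ^ e * f (‖y‖ ^ 2)) • g y) (𝓝 0) (𝓝 0) := by
        apply squeeze_zero_norm hbnd
        have h4 : (fun y : E => |f (‖y‖ ^ 2)| * (C * ‖y‖)) 0 = 0 := by simp
        rw [← h4]
        exact hcf.tendsto
      rw [ContinuousAt, hu0]
      exact hT
    · apply ContinuousAt.continuousWithinAt
      have hny : ‖x‖ ≠ 0 := norm_ne_zero_iff.mpr hx0
      have h1 : ContinuousAt (fun y : E => ‖y‖ ^ e) x :=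
        (continuousAt_zpow₀ ‖x‖ e (Or.inl hny)).comp continuous_norm.continuousAt
      have h2 : ContinuousAt (fun y : E => f (‖y‖ ^ 2)) x := by
        have hmem : ‖x‖ ^ 2 ∈ Set.Ioo (-1:ℝ) 1 := by
          constructor
          · nlinarith [norm_nonneg x]
          · nlinarith [norm_nonneg x]
        have hsq : ContinuousAt (fun y : E => ‖y‖ ^ 2) x := (continuous_norm.pow 2).continuousAt
        have hf0 : ContinuousAt f ((fun y : E => ‖y‖ ^ 2) x) :=
          hf.continuousOn.continuousAt (Ioo_mem_nhds hmem.1 hmem.2)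
        exact ContinuousAt.comp (f := fun y : E => ‖y‖ ^ 2) hf0 hsq
      exact ((h1.mul h2).smul hg.continuous.continuousAt)
  | succ n IH =>
    intro F _ _ e d f g he hf hg hom hed
    have hene : e ≠ 0 := by rcases he with ⟨c, rfl⟩; omega
    have he2 : Odd (e - 2) := by rcases he with ⟨c, rfl⟩; exact ⟨c - 1, by ring⟩
    have he2ne : e - 2 ≠ 0 := by rcases he2 with ⟨c, hc⟩; omega
    obtain ⟨C, hC0, hC⟩ := bound_of_homog (hg.continuous) hom
    set G : ℝ → ℝ := fun r => (e : ℝ) * f r + 2 * r * deriv f r with hGdef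
    set g₁ : E → (E →L[ℝ] F) := fun x => (innerSL ℝ x).smulRight (g x) with hg₁def
    set D : E → (E →L[ℝ] F) := fun x =>
      (‖x‖ ^ (e - 2) * G (‖x‖ ^ 2)) • g₁ x + (‖x‖ ^ e * f (‖x‖ ^ 2)) • fderiv ℝ g x with hDdef
    have hder : ∀ x ∈ ball (0:E) 1,
        HasFDerivAt (fun x : E => (‖x‖ ^ e * f (‖x‖ ^ 2)) • g x) (D x) x := by
      intro x hx
      rw [mem_ball_zero_iff] at hx
      by_cases hx0 : x = 0
      · subst hx0
        have hD0 : D 0 = 0 := by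
          rw [hDdef]
          simp only [norm_zero]
          simp [zero_zpow _ he2ne, zero_zpow _ hene]
        rw [hD0, hasFDerivAt_iff_tendsto]
        have hu0 : (‖(0:E)‖ ^ e * f (‖(0:E)‖ ^ 2)) • g 0 = 0 := by
          simp [zero_zpow e hene]
        simp only [sub_zero, hu0, ContinuousLinearMap.zero_apply]
        apply squeeze_zero_norm (a := fun y : E => |f (‖y‖ ^ 2)| * (C * ‖y‖ ^ (n+1)))
        · intro y
          by_cases hy : y = 0
          · subst hy
            simp [zero_zpow e hene, zero_pow (Nat.succ_ne_zero n)]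
          · have hny : (0:ℝ) < ‖y‖ := norm_pos_iff.mpr hy
            rw [Real.norm_eq_abs, abs_of_nonneg (by positivity)]
            calc ‖y‖⁻¹ * ‖(‖y‖ ^ e * f (‖y‖ ^ 2)) • g y‖
                = (‖y‖⁻¹ * ‖y‖ ^ e * |f (‖y‖ ^ 2)|) * ‖g y‖ := by
                  rw [norm_smul, norm_mul, Real.norm_eq_abs, Real.norm_eq_abs,
                    abs_of_nonneg (zpow_nonneg hny.le e)]
                  ring
              _ ≤ (‖y‖⁻¹ * ‖y‖ ^ e * |f (‖y‖ ^ 2)|) * (C * ‖y‖ ^ d) := by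
                  refine mul_le_mul_of_nonneg_left (hC y) ?_
                  have := zpow_nonneg hny.le e
                  positivity
              _ = |f (‖y‖ ^ 2)| * (C * (‖y‖ ^ (-1:ℤ) * ‖y‖ ^ e * ‖y‖ ^ (d:ℤ))) := by
                  rw [zpow_neg_one, zpow_natCast]
                  ring
              _ = |f (‖y‖ ^ 2)| * (C * ‖y‖ ^ (n+1)) := by
                  rw [← zpow_add₀ hny.ne', ← zpow_add₀ hny.ne',
                    show (-1) + e + (d:ℤ) = ((n+1 : ℕ) : ℤ) by push_cast; push_cast at hed; omega,
                    zpow_natCast]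
        · have hsq : ContinuousAt (fun y : E => ‖y‖ ^ 2) (0:E) := (continuous_norm.pow 2).continuousAt
          have hf0 : ContinuousAt f ((fun y : E => ‖y‖ ^ 2) (0:E)) := by
            apply hf.continuousOn.continuousAt
            apply Ioo_mem_nhds <;> norm_num
          have h3 : ContinuousAt (fun y : E => f (‖y‖ ^ 2)) 0 :=
            ContinuousAt.comp (f := fun y : E => ‖y‖ ^ 2) hf0 hsq
          have hcf : ContinuousAt (fun y : E => |f (‖y‖ ^ 2)| * (C * ‖y‖ ^ (n+1))) 0 :=
            (h3.abs).mul ((continuous_const.mul (continuous_norm.pow (n+1))).continuousAt)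
          have h4 : (fun y : E => |f (‖y‖ ^ 2)| * (C * ‖y‖ ^ (n+1))) 0 = 0 := by
            simp [zero_pow (Nat.succ_ne_zero n)]
          rw [← h4]
          exact hcf.tendsto
      · -- x ≠ 0 : chain rule
        have hny : ‖x‖ ≠ 0 := norm_ne_zero_iff.mpr hx0
        have hnypos : (0:ℝ) < ‖x‖ := norm_pos_iff.mpr hx0
        have hmem : ‖x‖ ^ 2 ∈ Set.Ioo (-1:ℝ) 1 := by
          constructor
          · nlinarith [norm_nonneg x]
          · nlinarith [norm_nonneg x]
        have hzp : HasDerivAt (fun y : ℝ => y ^ e) ((e:ℝ) * ‖x‖ ^ (e - 1)) ‖x‖ :=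
          hasDerivAt_zpow e ‖x‖ (Or.inl hny)
        have hfd : HasDerivAt f (deriv f (‖x‖ ^ 2)) (‖x‖ ^ 2) := by
          have := (hf.differentiableOn (by simp)).differentiableAt (Ioo_mem_nhds hmem.1 hmem.2)
          exact this.hasDerivAt
        have hsq : HasDerivAt (fun y : ℝ => y ^ 2) (2 * ‖x‖) ‖x‖ := by
          simpa using hasDerivAt_pow 2 ‖x‖
        have hfsq : HasDerivAt (fun y : ℝ => f (y ^ 2)) (deriv f (‖x‖ ^ 2) * (2 * ‖x‖)) ‖x‖ :=
          HasDerivAt.comp (h₂ := f) (h := fun y : ℝ => y ^ 2) ‖x‖ hfd hsq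
        have hrho : HasDerivAt (fun y : ℝ => y ^ e * f (y ^ 2))
            ((e:ℝ) * ‖x‖ ^ (e - 1) * f (‖x‖ ^ 2) + ‖x‖ ^ e * (deriv f (‖x‖ ^ 2) * (2 * ‖x‖)))
            ‖x‖ := hzp.mul hfsq
        have hnrm := norm_hasFDerivAt hx0
        have hcomp := HasDerivAt.comp_hasFDerivAt (f := fun y : E => ‖y‖) x hrho hnrm
        have hgd : HasFDerivAt g (fderiv ℝ g x) x :=
          ((hg.differentiable (by simp)) x).hasFDerivAt
        have hu := hcomp.smul hgd
        have hscal : ‖x‖ ^ (e-2) * G (‖x‖ ^ 2)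
            = ((e:ℝ) * ‖x‖ ^ (e - 1) * f (‖x‖ ^ 2)
                + ‖x‖ ^ e * (deriv f (‖x‖ ^ 2) * (2 * ‖x‖))) * ‖x‖⁻¹ := by
          rw [hGdef]
          rw [show e - 2 = e - 1 - 1 by ring, zpow_sub_one₀ hny, zpow_sub_one₀ hny]
          field_simp
        have hDx : D x = (((fun y : ℝ => y ^ e * f (y ^ 2)) ∘ fun y : E => ‖y‖) x) • fderiv ℝ g x
            + ((((e:ℝ) * ‖x‖ ^ (e - 1) * f (‖x‖ ^ 2)
                + ‖x‖ ^ e * (deriv f (‖x‖ ^ 2) * (2 * ‖x‖))) • (‖x‖⁻¹ • innerSL ℝ x))).smulRight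
              (g x) := by
          rw [hDdef]
          ext v
          simp only [ContinuousLinearMap.add_apply, ContinuousLinearMap.smul_apply,
            ContinuousLinearMap.smulRight_apply, innerSL_apply_apply, Function.comp_apply, hg₁def,
            smul_eq_mul]
          rw [hscal]
          module
        rw [hDx]
        exact hu
    -- smoothness of the derivative
    have hGsm : ContDiffOn ℝ (⊤:ℕ∞) G (Set.Ioo (-1) 1) := by
      rw [hGdef]
      exact (contDiffOn_const.mul hf).add
        ((contDiffOn_const.mul contDiffOn_id).mul (hf.deriv_of_isOpen isOpen_Ioo htop))
    have hg₁sm : ContDiff ℝ (⊤:ℕ∞) g₁ := by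
      have h := ContDiff.clm_apply (n := ((⊤:ℕ∞) : WithTop ℕ∞))
        (((ContinuousLinearMap.smulRightL ℝ E F).contDiff).comp (innerSL ℝ).contDiff) hg
      exact h
    have hom₁ : ∀ t : ℝ, 0 ≤ t → ∀ x : E, g₁ (t • x) = t ^ (d+1) • g₁ x := by
      intro t ht x
      rw [hg₁def]
      ext v
      simp only [ContinuousLinearMap.smulRight_apply, innerSL_apply_apply,
        ContinuousLinearMap.smul_apply]
      rw [hom t ht x, real_inner_smul_left, smul_smul, smul_smul]
      congr 1
      ring
    have hterm1 : ContDiffOn ℝ (n : ℕ) (fun x : E => (‖x‖ ^ (e-2) * G (‖x‖ ^ 2)) • g₁ x)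
        (ball 0 1) := by
      refine IH (e-2) (d+1) G g₁ he2 hGsm hg₁sm hom₁ ?_
      push_cast
      push_cast at hed
      omega
    have hterm2 : ContDiffOn ℝ (n : ℕ) (fun x : E => (‖x‖ ^ e * f (‖x‖ ^ 2)) • fderiv ℝ g x)
        (ball 0 1) := by
      rcases Nat.eq_zero_or_pos d with hd0 | hdpos
      · subst hd0
        have hgc : g = fun _ => g 0 := by
          funext y
          have := hom 0 le_rfl y
          simpa using this.symm
        have hz : (fun x : E => (‖x‖ ^ e * f (‖x‖ ^ 2)) • fderiv ℝ g x)
            = fun _ : E => (0 : E →L[ℝ] F) := by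
          funext y
          rw [hgc]
          simp
        rw [hz]
        exact contDiffOn_const
      · obtain ⟨m, rfl⟩ : ∃ m, d = m + 1 := ⟨d - 1, by omega⟩
        have hom' := fderiv_homog hg hom
        have hom'' : ∀ t : ℝ, 0 ≤ t → ∀ x : E, fderiv ℝ g (t • x) = t ^ m • fderiv ℝ g x := by
          intro t ht x
          simpa using hom' t ht x
        refine IH e m f (fun x => fderiv ℝ g x) he hf (hg.fderiv_right htop) hom'' ?_
        push_cast
        push_cast at hed
        omega
    have hcast : ((n+1:ℕ) : WithTop ℕ∞) = ((n:ℕ) : WithTop ℕ∞) + 1 := by push_cast; ring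
    rw [hcast, contDiffOn_succ_iff_fderiv_of_isOpen isOpen_ball]
    refine ⟨fun x hx => (hder x hx).differentiableAt.differentiableWithinAt, ?_, ?_⟩
    · intro hcontra
      exfalso
      exact (by simp : ((n:ℕ) : WithTop ℕ∞) ≠ ⊤) hcontra
    · refine ContDiffOn.congr ?_ (fun x hx => (hder x hx).fderiv)
      exact hterm1.add hterm2


end Helpers

section Main

variable {E : Type} [NormedAddCommGroup E] [InnerProductSpace ℝ E]
  [FiniteDimensional ℝ E] [Nontrivial E]

set_option maxHeartbeats 1000000 in
theorem radial_aux (k : ℕ) (hk : 3 ≤ k) (hko : Odd k) :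
    ContDiffOn ℝ (k - 1 : ℕ) (fun x : E => Fk k ‖x‖) (Metric.ball 0 1) := by
  set φ : ℝ → ℝ := fun r => (Real.sqrt (1 - r ^ (k-1)))⁻¹ with hφdef
  set w : ℝ → ℝ := fun t => t ^ (k-1) / Real.sqrt (1 - t ^ (2*k-2)) with hwdef
  have hwpos : ∀ t : ℝ, t ∈ Set.Ioo (-1:ℝ) 1 → 0 < 1 - t ^ (2*k-2) := by
    intro t ht
    have h1 : |t| < 1 := abs_lt.mpr ⟨ht.1, ht.2⟩
    have h2 : |t ^ (2*k-2)| < 1 := by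
      rw [abs_pow]
      exact pow_lt_one₀ (abs_nonneg t) h1 (by omega)
    linarith [le_abs_self (t ^ (2*k-2))]
  have hwcont : ContinuousOn w (Set.Ioo (-1:ℝ) 1) := by
    intro t ht
    have h2 := hwpos t ht
    have hden : Real.sqrt (1 - t ^ (2*k-2)) ≠ 0 := ne_of_gt (Real.sqrt_pos.mpr h2)
    exact (ContinuousAt.div ((continuous_pow (k-1)).continuousAt)
      ((Real.continuous_sqrt.comp
        (continuous_const.sub (continuous_pow (2*k-2)))).continuousAt) hden).continuousWithinAt
  have hφsm : ContDiffOn ℝ (⊤:ℕ∞) φ (Set.Ioo (-1:ℝ) 1) := by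
    intro r hr
    have h1 : (0:ℝ) < 1 - r ^ (k-1) := by
      have habs : |r| < 1 := abs_lt.mpr ⟨hr.1, hr.2⟩
      have h2 : |r ^ (k-1)| < 1 := by
        rw [abs_pow]
        exact pow_lt_one₀ (abs_nonneg r) habs (by omega)
      linarith [le_abs_self (r ^ (k-1))]
    have h2 : ContDiffAt ℝ (⊤:ℕ∞) (fun s : ℝ => 1 - s ^ (k-1)) r :=
      (contDiff_const.sub (contDiff_id.pow _)).contDiffAt
    have h3 : ContDiffAt ℝ (⊤:ℕ∞) (fun s : ℝ => Real.sqrt (1 - s ^ (k-1))) r :=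
      (Real.contDiffAt_sqrt h1.ne').comp r h2
    exact (h3.inv (ne_of_gt (Real.sqrt_pos.mpr h1))).contDiffWithinAt
  have hene : ((k:ℤ) - 2) ≠ 0 := by omega
  set D₁ : E → (E →L[ℝ] ℝ) :=
    fun x => (‖x‖ ^ ((k:ℤ) - 2) * φ (‖x‖ ^ 2)) • innerSL ℝ x with hD₁def
  have hder : ∀ x ∈ Metric.ball (0:E) 1, HasFDerivAt (fun x : E => Fk k ‖x‖) (D₁ x) x := by
    intro x hx
    rw [mem_ball_zero_iff] at hx
    by_cases hx0 : x = 0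
    · subst hx0
      have hD₁0 : D₁ 0 = 0 := by
        rw [hD₁def]
        simp [zero_zpow _ hene]
      have hFk0 : Fk k ‖(0:E)‖ = 0 := by
        simp [Fk]
      rw [hD₁0, hasFDerivAt_iff_tendsto]
      simp only [sub_zero, hFk0, ContinuousLinearMap.zero_apply]
      apply squeeze_zero_norm' (a := fun y : E => 2 * ‖y‖ ^ 2)
      · filter_upwards [Metric.ball_mem_nhds (0:E) (show (0:ℝ) < 1/2 by norm_num)] with y hy
        rw [mem_ball_zero_iff] at hy
        by_cases hy0 : y = 0
        · subst hy0
          simp [Fk]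
        · have hny : (0:ℝ) < ‖y‖ := norm_pos_iff.mpr hy0
          have hbI : ∀ t ∈ Set.uIoc (0:ℝ) ‖y‖, ‖w t‖ ≤ 2 * ‖y‖ ^ 2 := by
            intro t ht
            rw [Set.uIoc_of_le (norm_nonneg y)] at ht
            obtain ⟨ht0, ht1⟩ := ht
            have htle : t ≤ 1/2 := le_trans ht1 hy.le
            have ht1' : t ≤ 1 := by linarith
            have h2k : t ^ (2*k-2) ≤ 1/2 := by
              calc t ^ (2*k-2) ≤ t ^ 1 := pow_le_pow_of_le_one ht0.le ht1' (by omega)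
                _ ≤ 1/2 := by rwa [pow_one]
            have hsqrt : (1:ℝ)/2 ≤ Real.sqrt (1 - t ^ (2*k-2)) := by
              rw [show (1:ℝ)/2 = Real.sqrt (1/4) by
                rw [show (1:ℝ)/4 = (1/2)^2 by norm_num, Real.sqrt_sq (by norm_num)]]
              apply Real.sqrt_le_sqrt
              linarith
            have hwt : w t = t ^ (k-1) * (Real.sqrt (1 - t ^ (2*k-2)))⁻¹ := by
              simp only [hwdef, div_eq_mul_inv]
            have hinv : (Real.sqrt (1 - t ^ (2*k-2)))⁻¹ ≤ 2 := by
              rw [show (2:ℝ) = (1/2 : ℝ)⁻¹ by norm_num]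
              exact inv_anti₀ (by norm_num) hsqrt
            have htk : t ^ (k-1) ≤ t ^ 2 := pow_le_pow_of_le_one ht0.le ht1' (by omega)
            have hty : t ^ 2 ≤ ‖y‖ ^ 2 := pow_le_pow_left₀ ht0.le ht1 2
            have hwnn : 0 ≤ w t := by
              rw [hwt]
              positivity
            rw [Real.norm_eq_abs, abs_of_nonneg hwnn, hwt]
            calc t ^ (k-1) * (Real.sqrt (1 - t ^ (2*k-2)))⁻¹
                ≤ t ^ 2 * 2 := by
                  apply mul_le_mul htk hinv (by positivity) (by positivity)
              _ ≤ ‖y‖ ^ 2 * 2 := by nlinarith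
              _ = 2 * ‖y‖ ^ 2 := by ring
          have hIb : ‖Fk k ‖y‖‖ ≤ 2 * ‖y‖ ^ 2 * |‖y‖ - 0| :=
            intervalIntegral.norm_integral_le_of_norm_le_const hbI
          rw [sub_zero, abs_of_nonneg (norm_nonneg y)] at hIb
          rw [Real.norm_eq_abs, abs_of_nonneg (by positivity)]
          calc ‖y‖⁻¹ * ‖Fk k ‖y‖‖ ≤ ‖y‖⁻¹ * (2 * ‖y‖ ^ 2 * ‖y‖) := by
                exact mul_le_mul_of_nonneg_left hIb (by positivity)
            _ = 2 * ‖y‖ ^ 2 := by field_simp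
      · have hcont : Continuous (fun y : E => 2 * ‖y‖ ^ 2) :=
          continuous_const.mul (continuous_norm.pow 2)
        have h4 : (fun y : E => 2 * ‖y‖ ^ 2) 0 = 0 := by simp
        rw [← h4]
        exact hcont.continuousAt
    · have hny : ‖x‖ ≠ 0 := norm_ne_zero_iff.mpr hx0
      have hnypos : (0:ℝ) < ‖x‖ := norm_pos_iff.mpr hx0
      have hmem : ‖x‖ ∈ Set.Ioo (-1:ℝ) 1 := ⟨by linarith, hx⟩
      have hsub : Set.uIcc (0:ℝ) ‖x‖ ⊆ Set.Ioo (-1:ℝ) 1 := by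
        rw [Set.uIcc_of_le (norm_nonneg x)]
        intro t ht
        exact ⟨by linarith [ht.1], lt_of_le_of_lt ht.2 hx⟩
      have hInt : IntervalIntegrable w MeasureTheory.volume 0 ‖x‖ :=
        (hwcont.mono hsub).intervalIntegrable
      have hmeas := ContinuousOn.stronglyMeasurableAtFilter
        (μ := MeasureTheory.volume) isOpen_Ioo hwcont ‖x‖ hmem
      have hcontAt : ContinuousAt w ‖x‖ := hwcont.continuousAt (Ioo_mem_nhds hmem.1 hmem.2)
      have hFTC : HasDerivAt (fun u => ∫ t in (0:ℝ)..u, w t) (w ‖x‖) ‖x‖ :=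
        intervalIntegral.integral_hasDerivAt_right hInt hmeas hcontAt
      have hFk : HasDerivAt (Fk k) (w ‖x‖) ‖x‖ := hFTC
      have hcomp := HasDerivAt.comp_hasFDerivAt (f := fun y : E => ‖y‖) x hFk
        (norm_hasFDerivAt hx0)
      have hforce : D₁ x = w ‖x‖ • (‖x‖⁻¹ • innerSL ℝ x) := by
        rw [hD₁def, smul_smul]
        congr 1
        have hpow : (‖x‖^2) ^ (k-1) = ‖x‖ ^ (2*k-2) := by
          rw [← pow_mul]
          congr 1
          omega
        have hz : ‖x‖ ^ ((k:ℤ) - 2) = ‖x‖ ^ ((k-1 : ℕ)) * ‖x‖⁻¹ := by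
          rw [show (k:ℤ) - 2 = ((k-1 : ℕ) : ℤ) - 1 by push_cast; omega,
            zpow_sub_one₀ hny, zpow_natCast]
        simp only [hφdef, hwdef]
        rw [hpow, hz, div_eq_mul_inv]
        ring
      rw [hforce]
      exact hcomp
  have hodd : Odd ((k:ℤ) - 2) := by
    obtain ⟨m, hm⟩ := hko
    exact ⟨(m:ℤ) - 1, by push_cast [hm]; ring⟩
  have homInner : ∀ t : ℝ, 0 ≤ t → ∀ x : E,
      (fun x : E => (innerSL ℝ x : E →L[ℝ] ℝ)) (t • x)
        = t ^ (1:ℕ) • (fun x : E => (innerSL ℝ x : E →L[ℝ] ℝ)) x := by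
    intro t ht x
    ext v
    simp [real_inner_smul_left]
  have hsm : ContDiffOn ℝ ((k-2 : ℕ) : ℕ) D₁ (Metric.ball 0 1) := by
    refine key_induct (k-2) ((k:ℤ)-2) 1 φ (fun x : E => innerSL ℝ x) hodd hφsm
      ((innerSL ℝ).contDiff) homInner ?_
    push_cast
    omega
  have hsplit : ((k-1:ℕ) : WithTop ℕ∞) = ((k-2:ℕ) : WithTop ℕ∞) + 1 := by
    rw [show k - 1 = (k-2) + 1 by omega]
    push_cast
    ring
  rw [hsplit, contDiffOn_succ_iff_fderiv_of_isOpen Metric.isOpen_ball]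
  refine ⟨fun x hx => (hder x hx).differentiableAt.differentiableWithinAt, ?_, ?_⟩
  · intro hcontra
    exact absurd hcontra (by simp)
  · exact ContDiffOn.congr hsm (fun x hx => (hder x hx).fderiv)

end Main

/-- For odd `k ≥ 3`, the radial function `x ↦ Fk k ‖x‖` is of class `C^{k-1}` on the
open unit ball of `ℝ^k`. -/
theorem radial_Fk_contDiff_of_odd (k : ℕ) (hk : 3 ≤ k) (hko : Odd k) :
    ContDiffOn ℝ (k - 1 : ℕ) (fun x : EuclideanSpace ℝ (Fin k) => Fk k ‖x‖)
      (Metric.ball 0 1) := by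
  haveI : Nontrivial (EuclideanSpace ℝ (Fin k)) := by
    have hne : EuclideanSpace.single (⟨0, by omega⟩ : Fin k) (1:ℝ) ≠ 0 := by
      intro h
      have := congrArg (fun v : EuclideanSpace ℝ (Fin k) => v ⟨0, by omega⟩) h
      simp [EuclideanSpace.single_apply] at this
    exact ⟨⟨_, 0, hne⟩⟩
  exact radial_aux k hk hko
end

section
/- Let k ≥ 2 and m ≥ 1 be integers. Then there exists a real-analytic function u on the open ball B = {x ∈ ℝ^m : ‖x‖ < M_k} with values in (0,1] such that for every x ∈ B, ∫₀^{u(x)} t^{k-1}/√(1 - t^{2k-2}) dt = M_k - ‖x‖; that is, the function x ↦ f_k(M_k - ‖x‖) is real-analytic on B even though x ↦ M_k - ‖x‖ fails to be differentiable at the origin. -/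
open MeasureTheory

/-- `Mk k = Fk k 1`, the maximum of the inverse Archimedean scaling function. -/
noncomputable def Mk (k : ℕ) : ℝ := Fk k 1

namespace FkAux

open Complex Filter Set intervalIntegral
open scoped Topology

noncomputable section

variable (n K : ℕ)

/-- The real geometric sum `q(t) = 1 + t + ⋯ + t^{K-1}`, so `1 - t^K = (1-t) q(t)`. -/
def qR (t : ℝ) : ℝ := ∑ j ∈ Finset.range K, t ^ j

/-- Complex version of `qR`. -/
def qC (z : ℂ) : ℂ := ∑ j ∈ Finset.range K, z ^ j

/-- The regular part of the integrand: `P(t) = t^n / √(q(t))`. -/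
def PR (t : ℝ) : ℝ := t ^ n / Real.sqrt (qR K t)

/-- Complex version of `PR`, using `exp(-(1/2) log q)` for the inverse square root. -/
def PC (z : ℂ) : ℂ := z ^ n * Complex.exp (-(1/2) * Complex.log (qC K z))

/-- The integrand `φ(t) = t^n / √(1 - t^K)`. -/
def phi (t : ℝ) : ℝ := t ^ n / Real.sqrt (1 - t ^ K)

/-- The primitive `FF y = ∫₀^y φ`. -/
def FF (y : ℝ) : ℝ := ∫ t in (0:ℝ)..y, phi n K t

/-- The substituted variable `W z s = 1 - (1-z) s²`. -/
def W (z : ℂ) (s : ℝ) : ℂ := 1 - (1 - z) * (s : ℂ) ^ 2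

/-- Complex parameter integral `B(z) = ∫₀¹ P(1 - (1-z)s²) ds`. -/
def BC (z : ℂ) : ℂ := ∫ s in (0:ℝ)..1, PC n K (W z s)

/-- Real version of `BC`. -/
def BR (w : ℝ) : ℝ := ∫ s in (0:ℝ)..1, PR n K (1 - (1 - w) * s ^ 2)

/-- The complex extension of `(M - F(w))² = 4 (1-w) B(w)²`. -/
def hC (z : ℂ) : ℂ := 4 * (1 - z) * (BC n K z) ^ 2

/-- The real function `w ↦ (M - F(w))²`, written via its complex extension. -/
def hr (w : ℝ) : ℝ := (hC n K (w : ℂ)).re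

variable {n K}

lemma qR_pos (hK : 1 ≤ K) {t : ℝ} (ht : 0 ≤ t) : 0 < qR K t := by
  have h1 : (1 : ℝ) ≤ qR K t := by
    have := Finset.single_le_sum (f := fun j => t ^ j)
      (fun j _ => pow_nonneg ht j) (Finset.mem_range.2 hK)
    simpa [qR] using this
  linarith

lemma one_sub_pow_eq (t : ℝ) : 1 - t ^ K = (1 - t) * qR K t := by
  have := geom_sum_mul t K
  simp only [qR]
  linarith [this]

lemma qC_ofReal (t : ℝ) : qC K (t : ℂ) = ((qR K t : ℝ) : ℂ) := by
  simp [qC, qR, Complex.ofReal_sum]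

lemma PC_ofReal (hK : 1 ≤ K) {t : ℝ} (ht : 0 < t) :
    PC n K (t : ℂ) = ((PR n K t : ℝ) : ℂ) := by
  have hq : 0 < qR K t := qR_pos hK ht.le
  have hlog : Complex.log (qC K (t : ℂ)) = ((Real.log (qR K t) : ℝ) : ℂ) := by
    rw [qC_ofReal, Complex.ofReal_log hq.le]
  have hexp : Complex.exp (-(1/2) * Complex.log (qC K (t : ℂ)))
      = ((Real.exp (-(1/2) * Real.log (qR K t)) : ℝ) : ℂ) := by
    rw [hlog, Complex.ofReal_exp]
    norm_num
  have hval : Real.exp (-(1/2) * Real.log (qR K t)) = (Real.sqrt (qR K t))⁻¹ := by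
    rw [Real.sqrt_eq_rpow, Real.rpow_def_of_pos hq, ← Real.exp_neg]
    ring_nf
  rw [PC, hexp, hval, PR, div_eq_mul_inv]
  push_cast
  ring

lemma phi_eq {t : ℝ} (ht : t ≤ 1) :
    phi n K t = PR n K t / Real.sqrt (1 - t) := by
  rw [phi, PR, one_sub_pow_eq, Real.sqrt_mul (by linarith : (0:ℝ) ≤ 1 - t)]
  rw [div_div, mul_comm (Real.sqrt (1 - t)), ← div_div]

lemma PR_pos (hK : 1 ≤ K) {t : ℝ} (ht : 0 < t) : 0 < PR n K t :=
  div_pos (pow_pos ht n) (Real.sqrt_pos.2 (qR_pos hK ht.le))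

lemma PR_le_one (hK : 1 ≤ K) {t : ℝ} (ht : 0 ≤ t) (ht1 : t ≤ 1) : PR n K t ≤ 1 := by
  have hq : (1:ℝ) ≤ qR K t := by
    have := Finset.single_le_sum (f := fun j => t ^ j)
      (fun j _ => pow_nonneg ht j) (Finset.mem_range.2 hK)
    simpa [qR] using this
  have h1 : (1:ℝ) ≤ Real.sqrt (qR K t) := by
    rw [show (1:ℝ) = Real.sqrt 1 from (Real.sqrt_one).symm]
    exact Real.sqrt_le_sqrt (by simpa using hq)
  have hnum : t ^ n ≤ 1 := pow_le_one₀ ht ht1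
  calc PR n K t ≤ t ^ n := div_le_self (pow_nonneg ht n) h1
    _ ≤ 1 := hnum

lemma continuousAt_PR (hK : 1 ≤ K) {t : ℝ} (ht : 0 < t) :
    ContinuousAt (PR n K) t := by
  have hq : Continuous (qR K) := by
    unfold qR
    exact continuous_finset_sum _ (fun j _ => continuous_pow j)
  exact (continuousAt_id.pow n).div
    (Real.continuous_sqrt.continuousAt.comp hq.continuousAt)
    (ne_of_gt (Real.sqrt_pos.2 (qR_pos hK ht.le)))

lemma continuousAt_phi (hK : 1 ≤ K) {t : ℝ} (ht : 0 < t) (ht1 : t < 1) :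
    ContinuousAt (phi n K) t := by
  have hden : (0:ℝ) < 1 - t ^ K := by
    have : t ^ K < 1 := pow_lt_one₀ ht.le ht1 (by omega)
    linarith
  exact (continuousAt_id.pow n).div
    (Real.continuous_sqrt.continuousAt.comp (by fun_prop))
    (by positivity)

lemma measurable_phi : Measurable (phi n K) := by
  unfold phi
  exact (measurable_id.pow_const n).div
    (Real.continuous_sqrt.measurable.comp (by fun_prop))

lemma intervalIntegrable_phi (hK : 1 ≤ K) :
    IntervalIntegrable (phi n K) MeasureTheory.volume 0 1 := by
  have hg : IntervalIntegrable (fun t : ℝ => (1 - t) ^ (-(1/2) : ℝ)) MeasureTheory.volume 0 1 := by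
    have h0 : IntervalIntegrable (fun t : ℝ => t ^ (-(1/2) : ℝ)) MeasureTheory.volume 0 1 :=
      intervalIntegral.intervalIntegrable_rpow' (by norm_num)
    have := (h0.comp_sub_left 1)
    simpa using this.symm
  apply hg.mono_fun measurable_phi.aestronglyMeasurable
  rw [Filter.EventuallyLE, MeasureTheory.ae_restrict_iff' measurableSet_uIoc]
  apply Filter.Eventually.of_forall
  intro t ht
  rw [Set.uIoc_of_le (by norm_num : (0:ℝ) ≤ 1)] at ht
  obtain ⟨ht0, ht1⟩ := ht
  have h1t : (0:ℝ) ≤ 1 - t := by linarith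
  have hbound : phi n K t ≤ (1 - t) ^ (-(1/2) : ℝ) := by
    rw [phi_eq ht1]
    have hsq : Real.sqrt (1 - t) = (1 - t) ^ ((1/2) : ℝ) := Real.sqrt_eq_rpow _
    rcases eq_or_lt_of_le h1t with h | h
    · have hz : (0:ℝ) ^ (-(1/2):ℝ) = 0 := Real.zero_rpow (by norm_num)
      rw [← h, Real.sqrt_zero, div_zero, hz]
    · have hPRle : PR n K t ≤ 1 := PR_le_one hK ht0.le ht1
      have hPR0 : 0 ≤ PR n K t := (PR_pos hK ht0).le
      have hs : 0 < Real.sqrt (1 - t) := Real.sqrt_pos.2 h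
      rw [Real.rpow_neg h1t, ← hsq]
      rw [div_eq_mul_inv]
      calc PR n K t * (Real.sqrt (1 - t))⁻¹ ≤ 1 * (Real.sqrt (1 - t))⁻¹ := by
            apply mul_le_mul_of_nonneg_right hPRle (by positivity)
        _ = (Real.sqrt (1 - t))⁻¹ := by ring
  have hphipos : 0 ≤ phi n K t := by
    unfold phi
    positivity
  have hgpos : (0:ℝ) ≤ (1 - t) ^ (-(1/2) : ℝ) := Real.rpow_nonneg h1t _
  simp only [Real.norm_eq_abs, _root_.abs_of_nonneg hphipos, _root_.abs_of_nonneg hgpos]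
  exact hbound

lemma intervalIntegrable_phi' (hK : 1 ≤ K) {a b : ℝ} (ha : a ∈ Set.Icc (0:ℝ) 1)
    (hb : b ∈ Set.Icc (0:ℝ) 1) :
    IntervalIntegrable (phi n K) MeasureTheory.volume a b := by
  apply (intervalIntegrable_phi hK).mono_set
  rw [Set.uIcc_of_le (by norm_num : (0:ℝ) ≤ 1)]
  exact Set.uIcc_subset_Icc ha hb

lemma FF_continuousOn (hK : 1 ≤ K) : ContinuousOn (FF n K) (Set.Icc 0 1) := by
  have h : MeasureTheory.IntegrableOn (phi n K) (Set.uIcc 0 1) MeasureTheory.volume := by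
    rw [Set.uIcc_of_le (by norm_num : (0:ℝ) ≤ 1)]
    exact (intervalIntegrable_iff_integrableOn_Icc_of_le (by norm_num)).1
      (intervalIntegrable_phi hK)
  have := intervalIntegral.continuousOn_primitive_interval h
  rwa [Set.uIcc_of_le (by norm_num : (0:ℝ) ≤ 1)] at this

lemma FF_zero : FF n K 0 = 0 := by simp [FF]

lemma FF_strictMonoOn (hK : 1 ≤ K) : StrictMonoOn (FF n K) (Set.Icc 0 1) := by
  intro a ha b hb hab
  have hsub : FF n K b - FF n K a = ∫ t in a..b, phi n K t :=
    intervalIntegral.integral_interval_sub_left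
      (intervalIntegrable_phi' hK (Set.mem_Icc.2 ⟨le_refl 0, zero_le_one⟩) hb)
      (intervalIntegrable_phi' hK (Set.mem_Icc.2 ⟨le_refl 0, zero_le_one⟩) ha)
  have hpos : 0 < ∫ t in a..b, phi n K t := by
    apply intervalIntegral.intervalIntegral_pos_of_pos_on
      (intervalIntegrable_phi' hK ha hb)
    · intro t ht
      have ht0 : 0 < t := lt_of_le_of_lt ha.1 ht.1
      have ht1 : t < 1 := lt_of_lt_of_le ht.2 hb.2
      have : t ^ K < 1 := pow_lt_one₀ ht0.le ht1 (by omega)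
      unfold phi
      have : (0:ℝ) < 1 - t ^ K := by linarith
      positivity
    · exact hab
  linarith

lemma FF_le (hK : 1 ≤ K) {w : ℝ} (hw : w ∈ Set.Icc (0:ℝ) 1) : FF n K w ≤ FF n K 1 := by
  rcases eq_or_lt_of_le hw.2 with h | h
  · rw [h]
  · exact le_of_lt (FF_strictMonoOn hK hw (Set.mem_Icc.2 ⟨by norm_num, le_refl 1⟩) h)

lemma FF_one_pos (hK : 1 ≤ K) : 0 < FF n K 1 := by
  have := FF_strictMonoOn (n := n) hK (Set.mem_Icc.2 ⟨le_refl 0, by norm_num⟩)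
    (Set.mem_Icc.2 ⟨by norm_num, le_refl 1⟩) (by norm_num)
  rwa [FF_zero] at this

lemma continuousOn_BR_integrand (hK : 1 ≤ K) {w : ℝ} (hw : 0 < w) :
    ContinuousOn (fun s : ℝ => PR n K (1 - (1 - w) * s ^ 2)) (Set.Icc 0 1) := by
  intro s hs
  have harg : 0 < 1 - (1 - w) * s ^ 2 := by
    rcases le_or_gt w 1 with h | h
    · have hs2 : s ^ 2 ≤ 1 := pow_le_one₀ hs.1 hs.2
      nlinarith
    · nlinarith [sq_nonneg s]
  apply ContinuousAt.continuousWithinAt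
  have hcont : ContinuousAt (fun s : ℝ => 1 - (1 - w) * s ^ 2) s := by fun_prop
  have h2 := ContinuousAt.comp (g := PR n K) (f := fun s : ℝ => 1 - (1 - w) * s ^ 2) (x := s)
    (continuousAt_PR hK harg) hcont
  exact h2

lemma BR_pos (hK : 1 ≤ K) {w : ℝ} (hw : 0 < w) : 0 < BR n K w := by
  apply intervalIntegral.intervalIntegral_pos_of_pos_on
  · apply ContinuousOn.intervalIntegrable
    rw [Set.uIcc_of_le (by norm_num : (0:ℝ) ≤ 1)]
    exact continuousOn_BR_integrand hK hw
  · intro s hs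
    apply PR_pos hK
    rcases le_or_gt w 1 with h | h
    · nlinarith [hs.1, hs.2]
    · nlinarith [sq_nonneg s]
  · norm_num

lemma sub_id (hK : 1 ≤ K) {w : ℝ} (hw0 : 0 < w) (hw1 : w < 1) :
    FF n K 1 - FF n K w = 2 * Real.sqrt (1 - w) * BR n K w := by
  have h1w : (0:ℝ) < 1 - w := by linarith
  have hsw : 0 < Real.sqrt (1 - w) := Real.sqrt_pos.2 h1w
  -- Step A: change of variables on [w, c] for c < 1
  have hA : ∀ c ∈ Set.Ioo w 1, FF n K c - FF n K w
      = 2 * Real.sqrt (1 - w) * ∫ s in (Real.sqrt ((1 - c)/(1 - w)))..1,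
          PR n K (1 - (1 - w) * s ^ 2) := by
    intro c hc
    set a := Real.sqrt ((1 - c)/(1 - w)) with ha_def
    have hfrac0 : 0 < (1 - c)/(1 - w) := div_pos (by linarith [hc.2]) h1w
    have hfrac1 : (1 - c)/(1 - w) < 1 := by
      rw [div_lt_one h1w]; linarith [hc.1]
    have ha0 : 0 < a := Real.sqrt_pos.2 hfrac0
    have ha1 : a < 1 := by
      have h := Real.sqrt_lt_sqrt hfrac0.le hfrac1
      rwa [Real.sqrt_one] at h
    have huIcc : Set.uIcc a 1 = Set.Icc a 1 := Set.uIcc_of_le ha1.le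
    have hga : 1 - (1 - w) * a ^ 2 = c := by
      rw [ha_def, Real.sq_sqrt hfrac0.le]
      field_simp
      ring
    -- image bounds
    have himg : ∀ x ∈ Set.Icc a 1, 1 - (1 - w) * x ^ 2 ∈ Set.Icc w c := by
      intro x hx
      have hx0 : 0 < x := lt_of_lt_of_le ha0 hx.1
      have hxsq : x ^ 2 ≤ 1 := pow_le_one₀ hx0.le hx.2
      have haxsq : a ^ 2 ≤ x ^ 2 := pow_le_pow_left₀ (le_of_lt ha0) hx.1 2
      constructor
      · nlinarith
      · nlinarith [hga]
    have hderiv : ∀ x ∈ Set.uIcc a 1,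
        HasDerivAt (fun s : ℝ => 1 - (1 - w) * s ^ 2) (-2 * (1 - w) * x) x := by
      intro x _
      have h := ((hasDerivAt_pow 2 x).const_mul (1 - w)).const_sub 1
      exact h.congr_deriv (by ring)
    have hcont_f' : ContinuousOn (fun x : ℝ => -2 * (1 - w) * x) (Set.uIcc a 1) := by
      fun_prop
    have hcont_phi : ContinuousOn (phi n K)
        ((fun s : ℝ => 1 - (1 - w) * s ^ 2) '' Set.uIcc a 1) := by
      intro t ht
      obtain ⟨x, hx, rfl⟩ := ht
      rw [huIcc] at hx
      have := himg x hx
      exact (continuousAt_phi hK (lt_of_lt_of_le hw0 this.1)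
        (lt_of_le_of_lt this.2 hc.2)).continuousWithinAt
    have hcv := intervalIntegral.integral_comp_smul_deriv' hderiv hcont_f' hcont_phi
    -- identify the two integrands
    have hcongr : ∫ x in a..1,
          (-2 * (1 - w) * x) • (phi n K ∘ fun s : ℝ => 1 - (1 - w) * s ^ 2) x
        = ∫ x in a..1, (-2 * Real.sqrt (1 - w)) * PR n K (1 - (1 - w) * x ^ 2) := by
      apply intervalIntegral.integral_congr
      intro x hx
      rw [huIcc] at hx
      simp only [Function.comp_apply]
      have hx0 : 0 < x := lt_of_lt_of_le ha0 hx.1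
      have hmem := himg x hx
      have hle1 : 1 - (1 - w) * x ^ 2 ≤ 1 := by nlinarith [hmem.1, hw0]
      rw [phi_eq (le_of_lt (lt_of_le_of_lt hmem.2 hc.2))]
      have hsub : 1 - (1 - (1 - w) * x ^ 2) = (1 - w) * x ^ 2 := by ring
      rw [hsub, Real.sqrt_mul h1w.le, Real.sqrt_sq hx0.le]
      have hss : Real.sqrt (1 - w) * Real.sqrt (1 - w) = 1 - w :=
        Real.mul_self_sqrt h1w.le
      rw [smul_eq_mul]
      field_simp
      linear_combination PR n K (1 - (1 - w) * x ^ 2) * hss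
    have hlhs : ∫ x in a..1, (-2 * Real.sqrt (1 - w)) * PR n K (1 - (1 - w) * x ^ 2)
        = (-2 * Real.sqrt (1 - w)) * ∫ x in a..1, PR n K (1 - (1 - w) * x ^ 2) :=
      intervalIntegral.integral_const_mul _ _
    -- the RHS of hcv
    have hint_wc : ∫ t in (1 - (1 - w) * a ^ 2)..(1 - (1 - w) * 1 ^ 2), phi n K t
        = ∫ t in c..w, phi n K t := by
      rw [hga]; norm_num
    have hFlip : ∫ t in c..w, phi n K t = -(FF n K c - FF n K w) := by
      have h1 : ∫ t in w..c, phi n K t = FF n K c - FF n K w :=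
        (intervalIntegral.integral_interval_sub_left (f := phi n K)
          (intervalIntegrable_phi' hK (Set.mem_Icc.2 ⟨le_refl 0, zero_le_one⟩)
            (Set.mem_Icc.2 ⟨by linarith [hc.1], le_of_lt hc.2⟩))
          (intervalIntegrable_phi' hK (Set.mem_Icc.2 ⟨le_refl 0, zero_le_one⟩)
            (Set.mem_Icc.2 ⟨hw0.le, hw1.le⟩))).symm
      rw [intervalIntegral.integral_symm, h1]
    rw [hcongr, hlhs] at hcv
    rw [hint_wc, hFlip] at hcv
    linear_combination hcv
  -- Step B: take the limit c → 1⁻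
  have hIoo_mem : Set.Ioo w 1 ∈ 𝓝[<] (1:ℝ) :=
    Ioo_mem_nhdsLT_of_mem (Set.mem_Ioc.2 ⟨hw1, le_refl 1⟩)
  -- LHS limit
  have hT1 : Tendsto (fun c => FF n K c - FF n K w) (𝓝[<] (1:ℝ))
      (𝓝 (FF n K 1 - FF n K w)) := by
    have hIcc_mem : Set.Icc (0:ℝ) 1 ∈ 𝓝[<] (1:ℝ) :=
      Filter.mem_of_superset hIoo_mem (fun x hx => ⟨by linarith [hx.1, hw0], hx.2.le⟩)
    have h1 : Tendsto (FF n K) (𝓝[Set.Icc (0:ℝ) 1] 1) (𝓝 (FF n K 1)) :=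
      (FF_continuousOn hK 1 (Set.mem_Icc.2 ⟨zero_le_one, le_refl 1⟩)).tendsto
    exact (h1.mono_left (nhdsWithin_le_of_mem hIcc_mem)).sub_const _
  -- RHS limit
  set J : ℝ → ℝ := fun a => ∫ s in a..1, PR n K (1 - (1 - w) * s ^ 2) with hJ_def
  have hint01 : IntervalIntegrable (fun s : ℝ => PR n K (1 - (1 - w) * s ^ 2))
      MeasureTheory.volume 0 1 := by
    apply ContinuousOn.intervalIntegrable
    rw [Set.uIcc_of_le zero_le_one]
    exact continuousOn_BR_integrand hK hw0
  have hJcont : ContinuousOn J (Set.Icc 0 1) := by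
    have hprim : ContinuousOn (fun a => ∫ s in (0:ℝ)..a, PR n K (1 - (1 - w) * s ^ 2))
        (Set.Icc (0:ℝ) 1) := by
      have h := intervalIntegral.continuousOn_primitive_interval
        (μ := MeasureTheory.volume) (f := fun s : ℝ => PR n K (1 - (1 - w) * s ^ 2)) (a := (0:ℝ)) (b := 1) ?_
      · rwa [Set.uIcc_of_le zero_le_one] at h
      · rw [Set.uIcc_of_le zero_le_one]
        exact (continuousOn_BR_integrand hK hw0).integrableOn_Icc
    have hJeq : ∀ a ∈ Set.Icc (0:ℝ) 1, J a
        = (∫ s in (0:ℝ)..1, PR n K (1 - (1 - w) * s ^ 2))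
          - ∫ s in (0:ℝ)..a, PR n K (1 - (1 - w) * s ^ 2) := by
      intro a ha
      have := intervalIntegral.integral_interval_sub_left hint01
        (hint01.mono_set (by
          rw [Set.uIcc_of_le ha.1, Set.uIcc_of_le zero_le_one]
          exact Set.Icc_subset_Icc (le_refl 0) ha.2))
      rw [hJ_def]; dsimp only; rw [← this]
    exact (continuousOn_const.sub hprim).congr hJeq
  have hsig : Tendsto (fun c : ℝ => Real.sqrt ((1 - c)/(1 - w))) (𝓝[<] (1:ℝ))
      (𝓝[Set.Icc (0:ℝ) 1] 0) := by
    apply tendsto_nhdsWithin_of_tendsto_nhds_of_eventually_within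
    · have hcont : Continuous (fun c : ℝ => Real.sqrt ((1 - c)/(1 - w))) := by
        fun_prop
      have := hcont.continuousAt (x := 1)
      have hval : Real.sqrt ((1 - (1:ℝ))/(1 - w)) = 0 := by norm_num
      rw [ContinuousAt, hval] at this
      exact this.mono_left nhdsWithin_le_nhds
    · filter_upwards [hIoo_mem] with c hc
      constructor
      · exact Real.sqrt_nonneg _
      · rw [Real.sqrt_le_one]
        rw [div_le_one h1w]
        linarith [hc.1]
  have hT2 : Tendsto (fun c : ℝ => 2 * Real.sqrt (1 - w)
      * J (Real.sqrt ((1 - c)/(1 - w)))) (𝓝[<] (1:ℝ))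
      (𝓝 (2 * Real.sqrt (1 - w) * J 0)) := by
    have := (hJcont 0 (Set.mem_Icc.2 ⟨le_refl 0, zero_le_one⟩)).tendsto.comp hsig
    exact this.const_mul _
  have heq : (fun c => FF n K c - FF n K w) =ᶠ[𝓝[<] (1:ℝ)]
      (fun c => 2 * Real.sqrt (1 - w) * J (Real.sqrt ((1 - c)/(1 - w)))) := by
    filter_upwards [hIoo_mem] with c hc
    exact hA c hc
  have := tendsto_nhds_unique (hT1.congr' heq) hT2
  rw [this]
  rfl

lemma arg_pos {w : ℝ} (hw : 0 < w) {s : ℝ} (hs : s ∈ Set.Icc (0:ℝ) 1) :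
    0 < 1 - (1 - w) * s ^ 2 := by
  rcases le_or_gt w 1 with h | h
  · have hs2 : s ^ 2 ≤ 1 := pow_le_one₀ hs.1 hs.2
    nlinarith
  · nlinarith [sq_nonneg s]

lemma continuous_qC : Continuous (qC K) := by
  unfold qC
  exact continuous_finset_sum _ (fun j _ => continuous_pow j)

lemma differentiableAt_qC (z : ℂ) : DifferentiableAt ℂ (qC K) z := by
  unfold qC
  exact DifferentiableAt.fun_sum (fun j _ => differentiableAt_pow j)

lemma differentiableAt_PC {z : ℂ} (hz : qC K z ∈ Complex.slitPlane) :
    DifferentiableAt ℂ (PC n K) z := by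
  unfold PC
  have hlog : DifferentiableAt ℂ (fun z => Complex.log (qC K z)) z :=
    (Complex.differentiableAt_log hz).comp z (differentiableAt_qC z)
  exact (differentiableAt_pow n).mul
    (Complex.differentiable_exp.differentiableAt.comp z (hlog.const_mul _))

lemma isOpen_V : IsOpen {z : ℂ | qC K z ∈ Complex.slitPlane} :=
  Complex.isOpen_slitPlane.preimage continuous_qC

lemma analyticOnNhd_PC : AnalyticOnNhd ℂ (PC n K) {z : ℂ | qC K z ∈ Complex.slitPlane} :=
  DifferentiableOn.analyticOnNhd
    (fun z hz => (differentiableAt_PC hz).differentiableWithinAt) isOpen_V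

lemma continuousOn_derivPC :
    ContinuousOn (deriv (PC n K)) {z : ℂ | qC K z ∈ Complex.slitPlane} :=
  ((analyticOnNhd_PC (n := n)).deriv (s := {z : ℂ | qC K z ∈ Complex.slitPlane})).continuousOn

lemma continuous_W : Continuous (fun p : ℂ × ℝ => W p.1 p.2) := by
  unfold W
  have : Continuous (fun p : ℂ × ℝ => ((p.2 : ℂ)) ^ 2) :=
    (Complex.continuous_ofReal.comp continuous_snd).pow 2
  exact continuous_const.sub ((continuous_const.sub continuous_fst).mul this)

lemma continuous_W_right (z : ℂ) : Continuous (fun s : ℝ => W z s) := by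
  unfold W
  exact continuous_const.sub
    (continuous_const.mul ((Complex.continuous_ofReal.pow 2)))

lemma W_ofReal (w s : ℝ) : W (w : ℂ) s = ((1 - (1 - w) * s ^ 2 : ℝ) : ℂ) := by
  unfold W; push_cast; ring

variable (K) in
/-- The "good" open set of parameters for the integral `BC`. -/
def Sdom : Set ℂ := {z : ℂ | ∀ s ∈ Set.Icc (0:ℝ) 1, qC K (W z s) ∈ Complex.slitPlane}

lemma isOpen_Sdom : IsOpen (Sdom K) := by
  rw [isOpen_iff_mem_nhds]
  intro z₀ hz₀
  have h := (isCompact_Icc (a := (0:ℝ)) (b := 1)).eventually_forall_of_forall_eventually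
    (x₀ := z₀) (P := fun z s => qC K (W z s) ∈ Complex.slitPlane)
    (fun s hs => by
      have hcont : ContinuousAt (fun p : ℂ × ℝ => qC K (W p.1 p.2)) (z₀, s) :=
        (continuous_qC.comp continuous_W).continuousAt
      exact hcont.eventually_mem (Complex.isOpen_slitPlane.mem_nhds (hz₀ s hs)))
  exact h

lemma real_mem_Sdom (hK : 1 ≤ K) {w : ℝ} (hw : 0 < w) : ((w : ℂ)) ∈ Sdom K := by
  intro s hs
  rw [W_ofReal, qC_ofReal]
  exact Complex.ofReal_mem_slitPlane.2 (qR_pos hK (arg_pos hw hs).le)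

lemma differentiableAt_BC {z₀ : ℂ} (hz₀ : z₀ ∈ Sdom K) :
    DifferentiableAt ℂ (BC n K) z₀ := by
  obtain ⟨ε, hε, hball⟩ := Metric.mem_nhds_iff.1 ((isOpen_Sdom (K := K)).mem_nhds hz₀)
  have hε' : 0 < ε / 2 := by positivity
  have hcb : Metric.closedBall z₀ (ε / 2) ⊆ Sdom K := fun z hz => by
    apply hball
    rw [Metric.mem_ball]
    rw [Metric.mem_closedBall] at hz
    linarith
  set T : Set ℂ := (fun p : ℂ × ℝ => W p.1 p.2) ''
    ((Metric.closedBall z₀ (ε / 2)) ×ˢ Set.Icc (0:ℝ) 1) with hT_def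
  have hTcpt : IsCompact T :=
    ((isCompact_closedBall _ _).prod isCompact_Icc).image continuous_W
  have hTsub : T ⊆ {z : ℂ | qC K z ∈ Complex.slitPlane} := by
    rintro t ⟨⟨z, s⟩, ⟨hzmem, hsmem⟩, rfl⟩
    exact hcb hzmem s hsmem
  obtain ⟨C, hC⟩ := hTcpt.exists_bound_of_continuousOn
    ((continuousOn_derivPC (n := n)).mono hTsub)
  have hC0 : 0 ≤ C := by
    have hmem : W z₀ 0 ∈ T := ⟨(z₀, 0), ⟨Metric.mem_closedBall_self hε'.le,
      Set.mem_Icc.2 ⟨le_refl 0, zero_le_one⟩⟩, rfl⟩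
    exact le_trans (norm_nonneg _) (hC _ hmem)
  have key := intervalIntegral.hasDerivAt_integral_of_dominated_loc_of_deriv_le
    (F := fun z (s : ℝ) => PC n K (W z s))
    (F' := fun z (s : ℝ) => ((s : ℂ)) ^ 2 • deriv (PC n K) (W z s))
    (x₀ := z₀) (a := 0) (b := 1) (bound := fun _ => C)
    (μ := MeasureTheory.volume) (s := Metric.ball z₀ (ε / 2)) (Metric.ball_mem_nhds z₀ hε') ?_ ?_ ?_ ?_ ?_ ?_
  · exact ⟨_, key.2⟩
  · -- measurability of F x eventually
    filter_upwards [(isOpen_Sdom (K := K)).mem_nhds hz₀] with z hz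
    apply ContinuousOn.aestronglyMeasurable ?_ measurableSet_uIoc
    intro s hs
    have hs' : s ∈ Set.Icc (0:ℝ) 1 := by
      rw [Set.uIoc_of_le zero_le_one] at hs
      exact ⟨hs.1.le, hs.2⟩
    exact ((differentiableAt_PC (hz s hs')).continuousAt.comp
      (continuous_W_right z).continuousAt).continuousWithinAt
  · -- integrability at z₀
    apply ContinuousOn.intervalIntegrable
    intro s hs
    rw [Set.uIcc_of_le zero_le_one] at hs
    exact ((differentiableAt_PC (hz₀ s hs)).continuousAt.comp
      (continuous_W_right z₀).continuousAt).continuousWithinAt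
  · -- measurability of F' z₀
    apply ContinuousOn.aestronglyMeasurable ?_ measurableSet_uIoc
    intro s hs
    have hs' : s ∈ Set.Icc (0:ℝ) 1 := by
      rw [Set.uIoc_of_le zero_le_one] at hs
      exact ⟨hs.1.le, hs.2⟩
    apply ContinuousWithinAt.fun_smul
    · exact ((Complex.continuous_ofReal.pow 2).continuousAt).continuousWithinAt
    · have hWs : W z₀ s ∈ {z : ℂ | qC K z ∈ Complex.slitPlane} := hz₀ s hs'
      have hcA : ContinuousAt (deriv (PC n K)) (W z₀ s) :=
        (continuousOn_derivPC (n := n)).continuousAt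
          ((isOpen_V (K := K)).mem_nhds hWs)
      exact (hcA.comp (continuous_W_right z₀).continuousAt).continuousWithinAt
  · -- bound
    apply MeasureTheory.ae_of_all
    intro s hs x hx
    have hs' : s ∈ Set.Icc (0:ℝ) 1 := by
      rw [Set.uIoc_of_le zero_le_one] at hs
      exact ⟨hs.1.le, hs.2⟩
    have hWmem : W x s ∈ T :=
      ⟨(x, s), ⟨Metric.ball_subset_closedBall hx, hs'⟩, rfl⟩
    rw [norm_smul]
    have h1 : ‖((s:ℂ)) ^ 2‖ ≤ 1 := by
      rw [norm_pow, Complex.norm_real, Real.norm_eq_abs, _root_.abs_of_nonneg hs'.1]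
      exact pow_le_one₀ hs'.1 hs'.2
    calc ‖((s:ℂ)) ^ 2‖ * ‖deriv (PC n K) (W x s)‖
        ≤ 1 * C := mul_le_mul h1 (hC _ hWmem) (norm_nonneg _) zero_le_one
      _ = C := one_mul C
  · exact intervalIntegrable_const
  · -- differentiability in the parameter
    apply MeasureTheory.ae_of_all
    intro s hs x hx
    have hs' : s ∈ Set.Icc (0:ℝ) 1 := by
      rw [Set.uIoc_of_le zero_le_one] at hs
      exact ⟨hs.1.le, hs.2⟩
    have hW : HasDerivAt (fun z : ℂ => W z s) (((s:ℂ)) ^ 2) x := by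
      unfold W
      have h := (((hasDerivAt_id x).const_sub 1).mul_const (((s:ℂ)) ^ 2)).const_sub 1
      exact h.congr_deriv (by ring)
    have hslit : qC K (W x s) ∈ Complex.slitPlane :=
      hcb (Metric.ball_subset_closedBall hx) s hs'
    have hPC : HasDerivAt (PC n K) (deriv (PC n K) (W x s)) (W x s) :=
      (differentiableAt_PC hslit).hasDerivAt
    have := hPC.comp x hW
    exact this.congr_deriv (by rw [smul_eq_mul, mul_comm])

lemma analyticAt_BC {z₀ : ℂ} (hz₀ : z₀ ∈ Sdom K) : AnalyticAt ℂ (BC n K) z₀ := by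
  rw [analyticAt_iff_eventually_differentiableAt]
  filter_upwards [(isOpen_Sdom (K := K)).mem_nhds hz₀] with z hz
  exact differentiableAt_BC hz

lemma BC_ofReal (hK : 1 ≤ K) {w : ℝ} (hw : 0 < w) :
    BC n K (w : ℂ) = ((BR n K w : ℝ) : ℂ) := by
  unfold BC BR
  rw [← intervalIntegral.integral_ofReal]
  apply intervalIntegral.integral_congr
  intro s hs
  rw [Set.uIcc_of_le zero_le_one] at hs
  dsimp only
  rw [W_ofReal]
  exact PC_ofReal hK (arg_pos hw hs)

lemma hr_eq (hK : 1 ≤ K) {w : ℝ} (hw : 0 < w) :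
    hr n K w = 4 * (1 - w) * (BR n K w) ^ 2 := by
  unfold hr hC
  rw [BC_ofReal hK hw]
  rw [show (4 : ℂ) * (1 - (w:ℂ)) * (((BR n K w : ℝ)) : ℂ) ^ 2
    = ((4 * (1 - w) * (BR n K w) ^ 2 : ℝ) : ℂ) by push_cast; ring]
  exact Complex.ofReal_re _

lemma hr_eq_FF (hK : 1 ≤ K) {w : ℝ} (hw0 : 0 < w) (hw1 : w ≤ 1) :
    hr n K w = (FF n K 1 - FF n K w) ^ 2 := by
  rcases eq_or_lt_of_le hw1 with h | h
  · rw [h, hr_eq hK one_pos]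
    simp
  · have hs := sub_id (n := n) hK hw0 h
    rw [hr_eq hK hw0, hs]
    have h2 : Real.sqrt (1 - w) ^ 2 = 1 - w := Real.sq_sqrt (by linarith)
    linear_combination (-4 * (BR n K w) ^ 2) * h2

lemma analyticAt_hC (hK : 1 ≤ K) {w₀ : ℝ} (hw : 0 < w₀) :
    AnalyticAt ℂ (hC n K) (w₀ : ℂ) := by
  unfold hC
  exact (analyticAt_const.mul (analyticAt_const.sub analyticAt_id)).mul
    ((analyticAt_BC (real_mem_Sdom hK hw)).pow 2)

lemma analyticAt_hr (hK : 1 ≤ K) {w₀ : ℝ} (hw : 0 < w₀) :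
    AnalyticAt ℝ (hr n K) w₀ := by
  have h1 : AnalyticAt ℝ (hC n K) (w₀ : ℂ) := (analyticAt_hC hK hw).restrictScalars
  have h2 : AnalyticAt ℝ (fun w : ℝ => hC n K (w : ℂ)) w₀ :=
    h1.comp (Complex.ofRealCLM.analyticAt w₀)
  have h3 : AnalyticAt ℝ (fun w : ℝ => (hC n K (w : ℂ)).re) w₀ :=
    (Complex.reCLM.analyticAt _).comp h2
  exact h3

lemma hasDerivAt_FF (hK : 1 ≤ K) {w : ℝ} (hw0 : 0 < w) (hw1 : w < 1) :
    HasDerivAt (FF n K) (phi n K w) w := by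
  have hmeas : StronglyMeasurableAtFilter (phi n K) (𝓝 w) MeasureTheory.volume :=
    ContinuousAt.stronglyMeasurableAtFilter isOpen_Ioo
      (fun x hx => continuousAt_phi hK hx.1 hx.2) w ⟨hw0, hw1⟩
  exact intervalIntegral.integral_hasDerivAt_right
    (intervalIntegrable_phi' hK (Set.mem_Icc.2 ⟨le_refl 0, zero_le_one⟩)
      (Set.mem_Icc.2 ⟨hw0.le, hw1.le⟩))
    hmeas (continuousAt_phi hK hw0 hw1)

lemma exists_deriv_hr (hK : 1 ≤ K) {w₀ : ℝ} (hw0 : 0 < w₀) (hw1 : w₀ ≤ 1) :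
    ∃ c : ℝ, c ≠ 0 ∧ HasDerivAt (hr n K) c w₀ := by
  rcases eq_or_lt_of_le hw1 with h | h
  · -- boundary case w₀ = 1 : differentiate the complex formula
    subst h
    have hBC : DifferentiableAt ℂ (BC n K) ((1:ℝ) : ℂ) :=
      differentiableAt_BC (real_mem_Sdom hK one_pos)
    rw [Complex.ofReal_one] at hBC
    have hg : HasDerivAt (fun z : ℂ => (BC n K z) ^ 2)
        ((2 : ℕ) * (BC n K 1) ^ 1 * deriv (BC n K) 1) 1 :=
      hBC.hasDerivAt.pow 2
    have hf : HasDerivAt (fun z : ℂ => 4 * (1 - z)) (-4 : ℂ) 1 := by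
      have h := ((hasDerivAt_id (1:ℂ)).const_sub 1).const_mul (4 : ℂ)
      exact h.congr_deriv (by ring)
    have hmul := hf.mul hg
    have hC' : HasDerivAt (hC n K) (-4 * (BC n K 1) ^ 2) 1 := by
      have : hC n K = fun z => (4 * (1 - z)) * (BC n K z) ^ 2 := rfl
      rw [this]
      exact hmul.congr_deriv (by ring)
    have hre : HasDerivAt (fun w : ℝ => hC n K ((w : ℝ) : ℂ)) (-4 * (BC n K 1) ^ 2) 1 := by
      have h := HasDerivAt.comp_ofReal (z := (1:ℝ)) (by rwa [Complex.ofReal_one])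
      exact h
    have hfin := (Complex.reCLM.hasFDerivAt (x := hC n K ((1:ℝ) : ℂ))).comp_hasDerivAt 1 hre
    have hval : Complex.reCLM (-4 * (BC n K 1) ^ 2) = -4 * (BR n K 1) ^ 2 := by
      have hb : BC n K 1 = ((BR n K 1 : ℝ) : ℂ) := by
        have := BC_ofReal (n := n) hK one_pos
        rwa [Complex.ofReal_one] at this
      rw [hb, Complex.reCLM_apply,
        show (-4 * (((BR n K 1 : ℝ)) : ℂ) ^ 2) = (((-4 * (BR n K 1) ^ 2 : ℝ)) : ℂ) by
          push_cast; ring, Complex.ofReal_re]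
    refine ⟨-4 * (BR n K 1) ^ 2, ?_, ?_⟩
    · have := BR_pos (n := n) hK one_pos
      nlinarith
    · have : hr n K = fun w : ℝ => Complex.reCLM (hC n K ((w : ℝ) : ℂ)) := rfl
      rw [this, ← hval]
      exact hfin
  · -- interior case w₀ < 1 : use the real FTC formula
    have hFF := hasDerivAt_FF (n := n) hK hw0 h
    have hsub : HasDerivAt (fun v => FF n K 1 - FF n K v) (-phi n K w₀) w₀ := by
      have := hFF.const_sub (FF n K 1)
      simpa using this
    have hsq := hsub.pow 2
    have hev : hr n K =ᶠ[𝓝 w₀] fun v => (FF n K 1 - FF n K v) ^ 2 := by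
      filter_upwards [isOpen_Ioo.mem_nhds (⟨hw0, h⟩ : w₀ ∈ Set.Ioo (0:ℝ) 1)] with v hv
      exact hr_eq_FF hK hv.1 hv.2.le
    have hder : HasDerivAt (hr n K)
        ((2 : ℕ) * (FF n K 1 - FF n K w₀) ^ 1 * (-phi n K w₀)) w₀ :=
      hsq.congr_of_eventuallyEq hev
    refine ⟨_, ?_, hder⟩
    have hFFlt : FF n K w₀ < FF n K 1 :=
      FF_strictMonoOn hK (Set.mem_Icc.2 ⟨hw0.le, hw1⟩)
        (Set.mem_Icc.2 ⟨zero_le_one, le_refl 1⟩) h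
    have hphi : 0 < phi n K w₀ := by
      have hden : (0:ℝ) < 1 - w₀ ^ K := by
        have : w₀ ^ K < 1 := pow_lt_one₀ hw0.le h (by omega)
        linarith
      unfold phi
      positivity
    have : (0:ℝ) < FF n K 1 - FF n K w₀ := by linarith
    simp only [pow_one]
    have hlt : ((2:ℕ):ℝ) * (FF n K 1 - FF n K w₀) * -phi n K w₀ < 0 := by
      push_cast
      nlinarith
    exact ne_of_lt hlt

/-- 1D analytic inverse function theorem, packaged. -/
lemma analytic_local_inverse {f : ℝ → ℝ} {a c : ℝ} (hf : AnalyticAt ℝ f a)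
    (hd : HasDerivAt f c a) (hc : c ≠ 0) :
    ∃ g : ℝ → ℝ, AnalyticAt ℝ g (f a) ∧ ContinuousAt g (f a) ∧ g (f a) = a ∧
      ∀ᶠ y in 𝓝 (f a), f (g y) = y := by
  have hs : HasStrictDerivAt f c a := by
    have h := (hf.contDiffAt (n := 1)).hasStrictDerivAt one_ne_zero
    rwa [hd.deriv] at h
  have hse := hs.hasStrictFDerivAt_equiv hc
  set Φ := hse.toOpenPartialHomeomorph f with hΦ_def
  have hcoe : (Φ : ℝ → ℝ) = f := hse.toOpenPartialHomeomorph_coe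
  have h0 : a ∈ Φ.source := hse.mem_toOpenPartialHomeomorph_source
  have hfd : fderiv ℝ (⇑Φ) a
      = ↑((ContinuousLinearEquiv.unitsEquivAut ℝ) (Units.mk0 c hc)) := by
    rw [hcoe]
    exact hse.hasFDerivAt.fderiv
  have hA : AnalyticAt ℝ (⇑Φ.symm) (Φ a) :=
    Φ.analyticAt_symm' h0 (by rw [hcoe]; exact hf) hfd
  have hΦa : (Φ : ℝ → ℝ) a = f a := by rw [hcoe]
  refine ⟨Φ.symm, ?_, ?_, ?_, ?_⟩
  · rwa [hΦa] at hA
  · rw [← hΦa]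
    exact hA.continuousAt
  · have := Φ.left_inv h0
    rwa [hΦa] at this
  · have h1 := Φ.eventually_right_inverse (Φ.map_source h0)
    rw [hΦa] at h1
    filter_upwards [h1] with y hy
    rw [← hcoe]
    exact hy

end

end FkAux

open Filter Topology in
/-- **Composition with `f_k` smooths the distance-to-boundary cone.** For integers
`k ≥ 2` and `m ≥ 1`, there is a real-analytic function `u` on the open ball
`B = {x ∈ ℝ^m : ‖x‖ < M_k}`, with values in `(0,1]`, such that
`∫₀^{u(x)} t^{k-1}/√(1-t^{2k-2}) dt = M_k - ‖x‖` for all `x ∈ B`; that is,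
`x ↦ f_k (M_k - ‖x‖)` is real-analytic on `B` even though `x ↦ M_k - ‖x‖` fails to
be differentiable at the origin. -/
theorem fk_comp_distance_analytic (k m : ℕ) (hk : 2 ≤ k) (hm : 1 ≤ m) :
    ∃ u : EuclideanSpace ℝ (Fin m) → ℝ,
      AnalyticOnNhd ℝ u (Metric.ball 0 (Mk k)) ∧
      ∀ x ∈ Metric.ball (0 : EuclideanSpace ℝ (Fin m)) (Mk k),
        (0 < u x ∧ u x ≤ 1) ∧ Fk k (u x) = Mk k - ‖x‖ := by
  classical
  set n := k - 1 with hn_def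
  set K := 2 * k - 2 with hK_def
  have hK : 1 ≤ K := by omega
  have hMkFF : Mk k = FkAux.FF n K 1 := rfl
  set M := FkAux.FF n K 1 with hM_def
  have hM0 : 0 < M := FkAux.FF_one_pos hK
  set u : EuclideanSpace ℝ (Fin m) → ℝ := fun x =>
    if hx : ∃ w ∈ Set.Icc (0:ℝ) 1, FkAux.FF n K w = M - ‖x‖ then hx.choose else 1
    with hu_def
  have hspec : ∀ x : EuclideanSpace ℝ (Fin m), ‖x‖ < M →
      u x ∈ Set.Icc (0:ℝ) 1 ∧ FkAux.FF n K (u x) = M - ‖x‖ ∧ 0 < u x := by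
    intro x hx
    have hmem : M - ‖x‖ ∈ Set.Icc (FkAux.FF n K 0) (FkAux.FF n K 1) := by
      rw [FkAux.FF_zero]
      exact ⟨by linarith, by linarith [norm_nonneg x]⟩
    obtain ⟨w, hw, hweq⟩ := intermediate_value_Icc zero_le_one
      (FkAux.FF_continuousOn hK) hmem
    have hex : ∃ w ∈ Set.Icc (0:ℝ) 1, FkAux.FF n K w = M - ‖x‖ := ⟨w, hw, hweq⟩
    have hux : u x = hex.choose := by rw [hu_def]; exact dif_pos hex
    obtain ⟨hc1, hc2⟩ := hex.choose_spec
    rw [← hux] at hc1 hc2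
    refine ⟨hc1, hc2, ?_⟩
    rcases eq_or_lt_of_le hc1.1 with h0 | h0
    · exfalso
      rw [← h0, FkAux.FF_zero] at hc2
      have := norm_nonneg x
      linarith
    · exact h0
  have huniq : ∀ x : EuclideanSpace ℝ (Fin m), ‖x‖ < M → ∀ v ∈ Set.Icc (0:ℝ) 1,
      FkAux.FF n K v = M - ‖x‖ → v = u x := by
    intro x hx v hv hveq
    have h1 := hspec x hx
    exact (FkAux.FF_strictMonoOn hK).injOn hv h1.1 (by rw [hveq, h1.2.1])
  set nsq : EuclideanSpace ℝ (Fin m) → ℝ := fun x => ∑ i, x i ^ 2 with hnsq_def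
  have hnsq_eq : ∀ x, nsq x = ‖x‖ ^ 2 := by
    intro x
    rw [EuclideanSpace.norm_eq, Real.sq_sqrt (Finset.sum_nonneg fun i _ => sq_nonneg _)]
    simp [Real.norm_eq_abs, sq_abs]
    rfl
  have hnsq_ana : ∀ x, AnalyticAt ℝ nsq x := by
    intro x
    apply Finset.analyticAt_fun_sum
    intro i _
    exact ((EuclideanSpace.proj (𝕜 := ℝ) i).analyticAt x).pow 2
  refine ⟨u, ?_, ?_⟩
  · -- analyticity of u on the ball
    intro x₀ hx₀
    rw [mem_ball_zero_iff, hMkFF] at hx₀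
    obtain ⟨hmemIcc, hFFeq, hupos⟩ := hspec x₀ hx₀
    have hw1 : u x₀ ≤ 1 := hmemIcc.2
    have hrana := FkAux.analyticAt_hr (n := n) hK hupos
    obtain ⟨c, hc0, hder⟩ := FkAux.exists_deriv_hr (n := n) hK hupos hw1
    obtain ⟨g, hg_ana, hg_cont, hg_val, hg_right⟩ :=
      FkAux.analytic_local_inverse hrana hder hc0
    have hpt : FkAux.hr n K (u x₀) = nsq x₀ := by
      rw [FkAux.hr_eq_FF hK hupos hw1, hFFeq, hnsq_eq,
        show M - (M - ‖x₀‖) = ‖x₀‖ by ring]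
    rw [hpt] at hg_ana hg_cont hg_val hg_right
    have hcomp_ana : AnalyticAt ℝ (fun x => g (nsq x)) x₀ := hg_ana.comp (hnsq_ana x₀)
    have hnsq_contAt : ContinuousAt nsq x₀ := (hnsq_ana x₀).continuousAt
    have hEv1 : ∀ᶠ x in 𝓝 x₀, FkAux.hr n K (g (nsq x)) = nsq x :=
      hnsq_contAt.tendsto.eventually hg_right
    have hcomp_cont : ContinuousAt (fun x => g (nsq x)) x₀ :=
      ContinuousAt.comp (g := g) (f := nsq) (x := x₀) hg_cont hnsq_contAt
    have hEv2 : ∀ᶠ x in 𝓝 x₀, 0 < g (nsq x) := by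
      have hmem : g (nsq x₀) ∈ Set.Ioi (0:ℝ) := by
        rw [Set.mem_Ioi, hg_val]
        exact hupos
      have := hcomp_cont.eventually_mem (isOpen_Ioi.mem_nhds hmem)
      filter_upwards [this] with x hx
      exact hx
    have hEv3 : ∀ᶠ x in 𝓝 x₀, ‖x‖ < M := by
      have hcn : ContinuousAt (fun x : EuclideanSpace ℝ (Fin m) => ‖x‖) x₀ :=
        continuous_norm.continuousAt
      have := hcn.eventually_mem (isOpen_Iio.mem_nhds (Set.mem_Iio.2 hx₀))
      filter_upwards [this] with x hx
      exact hx
    have hEvEq : (fun x => g (nsq x)) =ᶠ[𝓝 x₀] u := by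
      filter_upwards [hEv1, hEv2, hEv3] with x h1 h2 h3
      have hv1 : g (nsq x) ≤ 1 := by
        by_contra hcon
        push_neg at hcon
        have hBR := FkAux.BR_pos (n := n) hK h2
        have hrv : FkAux.hr n K (g (nsq x))
            = 4 * (1 - g (nsq x)) * (FkAux.BR n K (g (nsq x))) ^ 2 :=
          FkAux.hr_eq hK h2
        have hneg : FkAux.hr n K (g (nsq x)) < 0 := by
          rw [hrv]
          nlinarith [mul_pos (by linarith : (0:ℝ) < g (nsq x) - 1)
            (pow_pos hBR 2)]
        rw [h1, hnsq_eq] at hneg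
        nlinarith [sq_nonneg ‖x‖]
      have hsq : (M - FkAux.FF n K (g (nsq x))) ^ 2 = ‖x‖ ^ 2 := by
        rw [← FkAux.hr_eq_FF hK h2 hv1, h1, hnsq_eq]
      have hle : FkAux.FF n K (g (nsq x)) ≤ M := FkAux.FF_le hK ⟨h2.le, hv1⟩
      have habs : M - FkAux.FF n K (g (nsq x)) = ‖x‖ := by
        have h4 := congrArg Real.sqrt hsq
        rwa [Real.sqrt_sq (by linarith), Real.sqrt_sq (norm_nonneg x)] at h4
      exact huniq x h3 (g (nsq x)) ⟨h2.le, hv1⟩ (by linarith)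
    exact hcomp_ana.congr hEvEq
  · -- pointwise properties
    intro x hx
    rw [mem_ball_zero_iff, hMkFF] at hx
    obtain ⟨hmem, heq, hpos⟩ := hspec x hx
    exact ⟨⟨hpos, hmem.2⟩, heq⟩
end

section
/- Let k ≥ 2 be an integer. Then the codimension-k Archimedean scaling function f_k is differentiable on (0, M_k) and satisfies the differential equation f_k(x)^{2k-2} · (1 + f_k'(x)²) = 1 for all x ∈ (0, M_k) (equivalently, y^{2k-2} + y^{2k-4}(y y')² = 1 for y = f_k). -/
open MeasureTheory

/-- the integrand -/
noncomputable def gk (k : ℕ) (t : ℝ) : ℝ := t ^ (k - 1) / Real.sqrt (1 - t ^ (2 * k - 2))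

lemma gk_contAt (k : ℕ) (hk : 2 ≤ k) {t : ℝ} (ht : |t| < 1) : ContinuousAt (gk k) t := by
  have h1 : |t| ^ (2 * k - 2) < 1 := pow_lt_one₀ (abs_nonneg t) ht (by omega)
  have h2 : t ^ (2 * k - 2) < 1 := by
    calc t ^ (2 * k - 2) ≤ |t ^ (2 * k - 2)| := le_abs_self _
    _ = |t| ^ (2 * k - 2) := by rw [abs_pow]
    _ < 1 := h1
  have hpos : (0:ℝ) < 1 - t ^ (2 * k - 2) := by linarith
  apply ContinuousAt.div (continuousAt_pow _ _)
  · exact (Real.continuous_sqrt.continuousAt).comp (by fun_prop)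
  · exact ne_of_gt (Real.sqrt_pos.2 hpos)

lemma gk_contOn (k : ℕ) (hk : 2 ≤ k) {a b : ℝ} (ha : 0 ≤ a) (hb : b < 1) (hab : a ≤ b) :
    ContinuousOn (gk k) (Set.uIcc a b) := by
  rw [Set.uIcc_of_le hab]
  intro t ht
  exact (gk_contAt k hk (by rw [abs_lt]; constructor <;> [linarith [ht.1]; linarith [ht.2]])).continuousWithinAt

lemma gk_intervalIntegrable (k : ℕ) (hk : 2 ≤ k) {a b : ℝ} (ha : 0 ≤ a) (hb : b < 1)
    (hab : a ≤ b) : IntervalIntegrable (gk k) volume a b :=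
  (gk_contOn k hk ha hb hab).intervalIntegrable

lemma gk_pos (k : ℕ) (hk : 2 ≤ k) {t : ℝ} (h0 : 0 < t) (h1 : t < 1) : 0 < gk k t := by
  have h2 : t ^ (2 * k - 2) < 1 := pow_lt_one₀ h0.le h1 (by omega)
  exact div_pos (pow_pos h0 _) (Real.sqrt_pos.2 (by linarith))

lemma gk_nonneg (k : ℕ) {t : ℝ} (h0 : 0 ≤ t) : 0 ≤ gk k t :=
  div_nonneg (pow_nonneg h0 _) (Real.sqrt_nonneg _)

lemma Fk_zero (k : ℕ) : Fk k 0 = 0 := by simp [Fk]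

lemma Fk_strictMonoOn (k : ℕ) (hk : 2 ≤ k) {u v : ℝ} (hu : 0 < u) (hv : v < 1) (huv : u < v) :
    Fk k u < Fk k v := by
  have hint : IntervalIntegrable (gk k) volume u v :=
    gk_intervalIntegrable k hk hu.le hv huv.le
  have h : Fk k u + ∫ t in u..v, gk k t = Fk k v :=
    intervalIntegral.integral_add_adjacent_intervals
      (gk_intervalIntegrable k hk le_rfl (lt_trans huv hv) hu.le) hint
  have hpos : 0 < ∫ t in u..v, gk k t := by
    apply intervalIntegral.intervalIntegral_pos_of_pos_on hint _ huv
    intro t ht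
    exact gk_pos k hk (lt_trans hu ht.1) (lt_trans ht.2 hv)
  linarith

lemma Fk_monoOn (k : ℕ) (hk : 2 ≤ k) {u v : ℝ} (hu : 0 ≤ u) (hv : v < 1) (huv : u ≤ v) :
    Fk k u ≤ Fk k v := by
  have h : Fk k u + ∫ t in u..v, gk k t = Fk k v :=
    intervalIntegral.integral_add_adjacent_intervals
      (gk_intervalIntegrable k hk le_rfl (lt_of_le_of_lt huv hv) hu)
      (gk_intervalIntegrable k hk hu hv huv)
  have hnn : 0 ≤ ∫ t in u..v, gk k t :=
    intervalIntegral.integral_nonneg huv (fun t ht => gk_nonneg k (le_trans hu ht.1))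
  linarith

lemma Fk_hasDerivAt_s12 (k : ℕ) (hk : 2 ≤ k) {y : ℝ} (h0 : 0 < y) (h1 : y < 1) :
    HasDerivAt (Fk k) (gk k y) y := by
  have hca := gk_contAt k hk (t := y) (by rw [abs_lt]; constructor <;> linarith)
  exact intervalIntegral.integral_hasDerivAt_right
    (gk_intervalIntegrable k hk le_rfl h1 h0.le)
    ⟨Set.Ioo (-1) 1, Ioo_mem_nhds (by linarith) h1,
      (ContinuousOn.aestronglyMeasurable (fun t ht => (gk_contAt k hk
        (abs_lt.2 ⟨ht.1, ht.2⟩)).continuousWithinAt) measurableSet_Ioo)⟩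
    hca

/-- **Differential equation for the Archimedean scaling function.** Let `k ≥ 2` and
let `fk` be the codimension-`k` Archimedean scaling function, i.e. the inverse of
`Fk k : [0,1] → [0,M_k]`.  Then `fk` is differentiable on `(0, M_k)` and satisfies
`fk(x)^{2k-2} (1 + fk'(x)²) = 1` there (equivalently,
`y^{2k-2} + y^{2k-4}(y y')² = 1` for `y = fk`). -/
theorem fk_differential_equation (k : ℕ) (hk : 2 ≤ k) (fk : ℝ → ℝ)
    (hfk : ∀ x ∈ Set.Icc 0 (Mk k), fk x ∈ Set.Icc (0:ℝ) 1 ∧ Fk k (fk x) = x) :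
    ∀ x ∈ Set.Ioo 0 (Mk k), DifferentiableAt ℝ fk x ∧
      fk x ^ (2 * k - 2) * (1 + (deriv fk x) ^ 2) = 1 := by
  have hfk_mem : ∀ z ∈ Set.Ioo 0 (Mk k), fk z ∈ Set.Ioo (0:ℝ) 1 := by
    intro z hz
    obtain ⟨⟨h0, h1⟩, hF⟩ := hfk z ⟨hz.1.le, hz.2.le⟩
    refine ⟨lt_of_le_of_ne h0 ?_, lt_of_le_of_ne h1 ?_⟩
    · intro h
      rw [← h, Fk_zero] at hF
      exact absurd hF.symm (ne_of_gt hz.1)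
    · intro h
      rw [h] at hF
      exact absurd hF (show Fk k 1 ≠ z from ne_of_gt hz.2)
  have hmono : StrictMonoOn fk (Set.Ioo 0 (Mk k)) := by
    intro a ha b hb hab
    by_contra hle
    push_neg at hle
    have h1 := hfk_mem a ha
    have h2 := hfk_mem b hb
    have := Fk_monoOn k hk h2.1.le h1.2 hle
    rw [(hfk a ⟨ha.1.le, ha.2.le⟩).2, (hfk b ⟨hb.1.le, hb.2.le⟩).2] at this
    exact absurd this (not_le.2 hab)
  -- recovering values from the inverse
  have hfk_Fk : ∀ y : ℝ, y ∈ Set.Ioo (0:ℝ) 1 → 0 < Fk k y → Fk k y < Mk k →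
      fk (Fk k y) = y := by
    intro y hy h0 h1
    have hIoo : fk (Fk k y) ∈ Set.Ioo (0:ℝ) 1 := hfk_mem _ ⟨h0, h1⟩
    have hFF := (hfk (Fk k y) ⟨h0.le, h1.le⟩).2
    rcases lt_trichotomy (fk (Fk k y)) y with h | h | h
    · have := Fk_strictMonoOn k hk hIoo.1 hy.2 h
      rw [hFF] at this; exact absurd this (lt_irrefl _)
    · exact h
    · have := Fk_strictMonoOn k hk hy.1 hIoo.2 h
      rw [hFF] at this; exact absurd this (lt_irrefl _)
  intro x hx
  obtain ⟨hx0, hxM⟩ := hx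
  have hx₁ : x / 2 ∈ Set.Ioo 0 (Mk k) := ⟨by linarith, by linarith⟩
  have hx₂ : (x + Mk k) / 2 ∈ Set.Ioo 0 (Mk k) := ⟨by linarith, by linarith⟩
  have h₁ := hfk_mem _ hx₁
  have h₂ := hfk_mem _ hx₂
  have hcont : ContinuousAt fk x := by
    apply hmono.continuousAt_of_image_mem_nhds (isOpen_Ioo.mem_nhds ⟨hx0, hxM⟩)
    have himg : Set.Ioo (fk (x / 2)) (fk ((x + Mk k) / 2)) ⊆ fk '' Set.Ioo 0 (Mk k) := by
      intro y hy
      have hy0 : 0 < y := lt_trans h₁.1 hy.1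
      have hy1 : y < 1 := lt_trans hy.2 h₂.2
      have hFy1 : x / 2 < Fk k y := by
        have := Fk_strictMonoOn k hk h₁.1 hy1 hy.1
        rwa [(hfk _ ⟨hx₁.1.le, hx₁.2.le⟩).2] at this
      have hFy2 : Fk k y < (x + Mk k) / 2 := by
        have := Fk_strictMonoOn k hk hy0 h₂.2 hy.2
        rwa [(hfk _ ⟨hx₂.1.le, hx₂.2.le⟩).2] at this
      have hmem : Fk k y ∈ Set.Ioo 0 (Mk k) := ⟨hx₁.1.trans hFy1, hFy2.trans hx₂.2⟩
      exact ⟨Fk k y, hmem, hfk_Fk y ⟨hy0, hy1⟩ hmem.1 hmem.2⟩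
    exact Filter.mem_of_superset
      (Ioo_mem_nhds (hmono hx₁ ⟨hx0, hxM⟩ (by linarith)) (hmono ⟨hx0, hxM⟩ hx₂ (by linarith)))
      himg
  have hy₀ := hfk_mem x ⟨hx0, hxM⟩
  have hF := Fk_hasDerivAt_s12 k hk hy₀.1 hy₀.2
  have hne : gk k (fk x) ≠ 0 := (gk_pos k hk hy₀.1 hy₀.2).ne'
  have hev : ∀ᶠ z in nhds x, Fk k (fk z) = z := by
    filter_upwards [Ioo_mem_nhds hx0 hxM] with z hz using (hfk z ⟨hz.1.le, hz.2.le⟩).2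
  have hd : HasDerivAt fk (gk k (fk x))⁻¹ x := hF.of_local_left_inverse hcont hne hev
  refine ⟨hd.differentiableAt, ?_⟩
  rw [hd.deriv]
  have hp : (0:ℝ) < fk x ^ (k - 1) := pow_pos hy₀.1 _
  have hs : (0:ℝ) < 1 - fk x ^ (2 * k - 2) := by
    have := pow_lt_one₀ hy₀.1.le hy₀.2 (show 2 * k - 2 ≠ 0 by omega)
    linarith
  have hsq : Real.sqrt (1 - fk x ^ (2 * k - 2)) ^ 2 = 1 - fk x ^ (2 * k - 2) :=
    Real.sq_sqrt hs.le
  have hpw : (fk x ^ (k - 1)) ^ 2 = fk x ^ (2 * k - 2) := by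
    rw [← pow_mul]; congr 1; omega
  have hg : gk k (fk x) = fk x ^ (k - 1) / Real.sqrt (1 - fk x ^ (2 * k - 2)) := rfl
  rw [hg, inv_div, div_pow, hsq, hpw]
  have hne2 : fk x ^ (2 * k - 2) ≠ 0 := by rw [← hpw]; positivity
  field_simp
  ring
end
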